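/- arXiv:1304.5829 — 6 statements merged into one kernel-verified Lean document; each statement's English description precedes it below -/
import Mathlib

section
/- Let M be a lattice over R, where R = ℤ or R = ℤ_p (p odd), and let τ_w ∈ O(M) be the symmetry (reflection) associated to a primitive vector w ∈ M. If Q(w) is odd or R = ℤ_p, then Rw is an orthogonal direct summand of M, i.e., M = Rw ⊥ M' for some sublattice M'. -/
open Matrix

/-- The linear functional `x ↦ w ⬝ᵥ G.mulVec x`. -/
private def bform {R : Type*} [CommRing R] {n : ℕ} (G : Matrix (Fin n) (Fin n) R)
    (w : Fin n → R) : (Fin n → R) →ₗ[R] R where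
  toFun x := w ⬝ᵥ G.mulVec x
  map_add' x y := by simp [Matrix.mulVec_add, dotProduct_add]
  map_smul' c x := by simp [Matrix.mulVec_smul, dotProduct_smul, smul_eq_mul]

private lemma ker_complement {R : Type*} [CommRing R] [IsDomain R] {n : ℕ}
    (G : Matrix (Fin n) (Fin n) R) (w : Fin n → R)
    (hQ : w ⬝ᵥ G.mulVec w ≠ 0)
    (hdvd : ∀ x : Fin n → R, ∃ d : R, w ⬝ᵥ G.mulVec x = d * (w ⬝ᵥ G.mulVec w)) :
    ∃ M' : Submodule R (Fin n → R),
      (∀ v ∈ M', w ⬝ᵥ G.mulVec v = 0) ∧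
      Submodule.span R {w} ⊓ M' = ⊥ ∧
      Submodule.span R {w} ⊔ M' = ⊤ := by
  refine ⟨LinearMap.ker (bform G w), fun v hv => hv, ?_, ?_⟩
  · rw [eq_bot_iff]
    rintro x ⟨hx1, hx2⟩
    obtain ⟨a, rfl⟩ := Submodule.mem_span_singleton.mp hx1
    have : a * (w ⬝ᵥ G.mulVec w) = 0 := by
      simpa [bform, Matrix.mulVec_smul, dotProduct_smul, smul_eq_mul] using hx2
    rcases mul_eq_zero.mp this with h | h
    · simp [h]
    · exact absurd h hQ
  · rw [eq_top_iff]
    intro x _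
    obtain ⟨d, hd⟩ := hdvd x
    have hmem : x - d • w ∈ LinearMap.ker (bform G w) := by
      simp [bform, Matrix.mulVec_sub, Matrix.mulVec_smul, dotProduct_sub,
        dotProduct_smul, smul_eq_mul, hd]
    have : x = d • w + (x - d • w) := by ring_nf
    rw [this]
    exact Submodule.add_mem_sup
      (Submodule.mem_span_singleton.mpr ⟨d, rfl⟩) hmem

private lemma basis_complement {R : Type*} [CommRing R] {n : ℕ}
    (G : Matrix (Fin n) (Fin n) R) (w : Fin n → R)
    (b : Module.Basis (Fin n) R (Fin n → R)) (i : Fin n) (hbi : b i = w)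
    (hzero : ∀ x : Fin n → R, w ⬝ᵥ G.mulVec x = 0) :
    ∃ M' : Submodule R (Fin n → R),
      (∀ v ∈ M', w ⬝ᵥ G.mulVec v = 0) ∧
      Submodule.span R {w} ⊓ M' = ⊥ ∧
      Submodule.span R {w} ⊔ M' = ⊤ := by
  refine ⟨Submodule.span R (b '' {j | j ≠ i}), fun v _ => hzero v, ?_, ?_⟩
  · rw [eq_bot_iff]
    intro x hx
    rw [Submodule.mem_inf] at hx
    obtain ⟨hx1, hx2⟩ := hx
    obtain ⟨a, rfl⟩ := Submodule.mem_span_singleton.mp hx1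
    rw [Module.Basis.mem_span_image] at hx2
    have hrepr : b.repr (a • w) i = a := by
      rw [← hbi, _root_.map_smul, b.repr_self]
      simp
    by_cases ha : a = 0
    · simp [ha]
    · exfalso
      have : i ∈ (b.repr (a • w)).support := by
        rw [Finsupp.mem_support_iff, hrepr]
        exact ha
      exact (hx2 this) rfl
  · rw [eq_top_iff]
    intro x _
    have : Submodule.span R ({w} : Set (Fin n → R)) = Submodule.span R (b '' {i}) := by
      simp [hbi]
    rw [this, ← Submodule.span_union, ← Set.image_union]
    have : ({i} : Set (Fin n)) ∪ {j | j ≠ i} = Set.univ := by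
      ext j; by_cases hj : j = i <;> simp [hj]
    rw [this, Set.image_univ, b.span_eq]
    trivial

private lemma two_unit {p : ℕ} [hp : Fact p.Prime] (h : p ≠ 2) : IsUnit (2 : ℤ_[p]) := by
  rw [PadicInt.isUnit_iff]
  have h1 : ‖(2:ℤ_[p])‖ ≤ 1 := PadicInt.norm_le_one _
  have h2 : ¬ ‖((2:ℤ):ℤ_[p])‖ < 1 := by
    rw [PadicInt.norm_int_lt_one_iff_dvd]
    intro hd
    have h3 : (p:ℤ) ∣ 2 := hd
    have := Int.le_of_dvd (by norm_num) h3
    have := hp.out.two_le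
    omega
  push_cast at h2
  linarith

/-- From the reflection hypotheses: `c * Q(w) = 2 * B(w,x)` for the `c` with `τ x = x - c • w`. -/
private lemma key_eq {R : Type*} [CommRing R] {n : ℕ}
    (G : Matrix (Fin n) (Fin n) R) (w : Fin n → R)
    (τ : (Fin n → R) →ₗ[R] (Fin n → R))
    (hiso : ∀ x y : Fin n → R, (τ x) ⬝ᵥ G.mulVec (τ y) = x ⬝ᵥ G.mulVec y)
    (hτw : τ w = -w) (x : Fin n → R) (c : R) (hc : τ x = x - c • w) :
    c * (w ⬝ᵥ G.mulVec w) = 2 * (w ⬝ᵥ G.mulVec x) := by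
  have := hiso w x
  rw [hτw, hc] at this
  simp only [Matrix.mulVec_sub, Matrix.mulVec_smul, dotProduct_sub, dotProduct_smul,
    neg_dotProduct, smul_eq_mul] at this
  linear_combination this

/-- Let `M` be a lattice over `R`, where `R = ℤ` or `R = ℤ_p` (`p` odd), with symmetric
bilinear form given by a Gram matrix `G`, and let `τ = τ_w ∈ O(M)` be the symmetry in a
primitive vector `w` (characterized by: `τ` is an isometry of `M`, `τ w = -w`, and `τ`
is the identity modulo `R·w`).  If `Q(w)` is odd or `R = ℤ_p`, then `R·w` is an
orthogonal direct summand of `M`. -/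
theorem stmt2 :
    (∀ (n : ℕ) (G : Matrix (Fin n) (Fin n) ℤ), G.IsSymm →
      ∀ w : Fin n → ℤ, (∃ (b : Module.Basis (Fin n) ℤ (Fin n → ℤ)) (i : Fin n), b i = w) →
      Odd (w ⬝ᵥ G.mulVec w) →
      ∀ τ : (Fin n → ℤ) →ₗ[ℤ] (Fin n → ℤ),
        (∀ x y : Fin n → ℤ, (τ x) ⬝ᵥ G.mulVec (τ y) = x ⬝ᵥ G.mulVec y) →
        τ w = -w → (∀ x : Fin n → ℤ, ∃ c : ℤ, τ x = x - c • w) →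
        ∃ M' : Submodule ℤ (Fin n → ℤ),
          (∀ v ∈ M', w ⬝ᵥ G.mulVec v = 0) ∧
          Submodule.span ℤ {w} ⊓ M' = ⊥ ∧
          Submodule.span ℤ {w} ⊔ M' = ⊤)
    ∧
    (∀ (p : ℕ) [Fact p.Prime], p ≠ 2 →
      ∀ (n : ℕ) (G : Matrix (Fin n) (Fin n) ℤ_[p]), G.IsSymm →
      ∀ w : Fin n → ℤ_[p], (∃ (b : Module.Basis (Fin n) ℤ_[p] (Fin n → ℤ_[p])) (i : Fin n), b i = w) →
      ∀ τ : (Fin n → ℤ_[p]) →ₗ[ℤ_[p]] (Fin n → ℤ_[p]),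
        (∀ x y : Fin n → ℤ_[p], (τ x) ⬝ᵥ G.mulVec (τ y) = x ⬝ᵥ G.mulVec y) →
        τ w = -w → (∀ x : Fin n → ℤ_[p], ∃ c : ℤ_[p], τ x = x - c • w) →
        ∃ M' : Submodule ℤ_[p] (Fin n → ℤ_[p]),
          (∀ v ∈ M', w ⬝ᵥ G.mulVec v = 0) ∧
          Submodule.span ℤ_[p] {w} ⊓ M' = ⊥ ∧
          Submodule.span ℤ_[p] {w} ⊔ M' = ⊤) := by
  constructor
  · intro n G _ w _ hodd τ hiso hτw hrefl
    have hQ : w ⬝ᵥ G.mulVec w ≠ 0 := by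
      intro h; rw [h] at hodd; exact (Int.not_odd_iff_even.mpr Even.zero) hodd
    apply ker_complement G w hQ
    intro x
    obtain ⟨c, hc⟩ := hrefl x
    have key := key_eq G w τ hiso hτw x c hc
    -- c * Q = 2 * B, Q odd ⇒ c even
    have hceven : Even c := by
      rcases Int.even_or_odd c with h | h
      · exact h
      · exfalso
        have : Odd (c * (w ⬝ᵥ G.mulVec w)) := h.mul hodd
        rw [key] at this
        exact (Int.not_odd_iff_even.mpr ⟨_, two_mul _⟩) this
    obtain ⟨c', hc'⟩ := hceven
    refine ⟨c', ?_⟩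
    have : (2:ℤ) * (c' * (w ⬝ᵥ G.mulVec w)) = 2 * (w ⬝ᵥ G.mulVec x) := by
      rw [← key, hc']; ring
    linarith
  · intro p _ hp n G _ w hprim τ hiso hτw hrefl
    obtain ⟨b, i, hbi⟩ := hprim
    obtain ⟨u, hu⟩ := (two_unit hp).exists_left_inv
    by_cases hQ : w ⬝ᵥ G.mulVec w = 0
    · -- degenerate case: B(w, ·) = 0
      apply basis_complement G w b i hbi
      intro x
      obtain ⟨c, hc⟩ := hrefl x
      have key := key_eq G w τ hiso hτw x c hc
      rw [hQ, mul_zero] at key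
      have : u * (2 * (w ⬝ᵥ G.mulVec x)) = 0 := by rw [← key]; ring
      rw [← mul_assoc, hu, one_mul] at this
      exact this
    · apply ker_complement G w hQ
      intro x
      obtain ⟨c, hc⟩ := hrefl x
      have key := key_eq G w τ hiso hτw x c hc
      refine ⟨u * c, ?_⟩
      have : u * (c * (w ⬝ᵥ G.mulVec w)) = u * (2 * (w ⬝ᵥ G.mulVec x)) := by rw [key]
      rw [← mul_assoc u 2, hu, one_mul] at this
      rw [← this]; ring
end

section
/- Let K be a positive definite ternary ℤ-lattice such that every element of O(K) has order at most 2. Then |O(K)| ≤ 8, and if |O(K)| = 8 then O(K) is isomorphic to (ℤ/2ℤ)³ and contains exactly three symmetries τ_w, τ_u, τ_v with w, u, v mutually orthogonal vectors of K. -/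
open Matrix

open Module Submodule

section helpers

private abbrev V3 := Fin 3 → ℚ

private lemma smul_cancel_vec {c d : ℚ} {w : V3} (hw : w ≠ 0) (h : c • w = d • w) : c = d := by
  by_contra hcd
  have h0 : (c - d) • w = 0 := by rw [sub_smul, h, sub_self]
  rcases smul_eq_zero.mp h0 with h' | h'
  · exact hcd (sub_eq_zero.mp h')
  · exact hw h'

private def cV (x : Fin 3 → ℤ) : V3 := fun i => (x i : ℚ)

private def Mq (M : Matrix (Fin 3) (Fin 3) ℤ) : Matrix (Fin 3) (Fin 3) ℚ :=
  M.map (fun n : ℤ => (n : ℚ))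

private lemma cV_inj : Function.Injective cV := by
  intro x y h
  funext i
  have := congrFun h i
  simpa [cV] using this

private lemma cV_zero : cV 0 = 0 := by funext i; simp [cV]

private lemma cV_ne_zero {x : Fin 3 → ℤ} (h : x ≠ 0) : cV x ≠ 0 := by
  intro h0; exact h (cV_inj (h0.trans cV_zero.symm))

private lemma cV_neg (x : Fin 3 → ℤ) : cV (-x) = -cV x := by funext i; simp [cV]

private lemma cV_mulVec (M : Matrix (Fin 3) (Fin 3) ℤ) (x : Fin 3 → ℤ) :
    cV (M *ᵥ x) = (Mq M) *ᵥ cV x := by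
  funext i
  simp only [cV, Mq, Matrix.mulVec, dotProduct, Matrix.map_apply]
  push_cast
  rfl

private lemma cast_dot (M : Matrix (Fin 3) (Fin 3) ℤ) (x y : Fin 3 → ℤ) :
    ((x ⬝ᵥ M *ᵥ y : ℤ) : ℚ) = cV x ⬝ᵥ (Mq M) *ᵥ cV y := by
  rw [← cV_mulVec]
  simp only [cV, dotProduct]
  push_cast
  rfl

private lemma Mq_mul (M N : Matrix (Fin 3) (Fin 3) ℤ) : Mq (M * N) = Mq M * Mq N := by
  show (M * N).map ⇑(Int.castRingHom ℚ) = M.map ⇑(Int.castRingHom ℚ) * N.map ⇑(Int.castRingHom ℚ)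
  exact Matrix.map_mul

private lemma Mq_one : Mq 1 = 1 := by
  show (1 : Matrix (Fin 3) (Fin 3) ℤ).map ⇑(Int.castRingHom ℚ) = 1
  simp

private lemma Mq_inj : Function.Injective Mq := by
  intro M N h
  ext i j
  have := congrFun (congrFun h i) j
  simpa [Mq] using this

private def toEnd (U : Matrix.GeneralLinearGroup (Fin 3) ℤ) : Module.End ℚ V3 :=
  (Mq U.val).mulVecLin

private lemma toEnd_mul (U V : Matrix.GeneralLinearGroup (Fin 3) ℤ) :
    toEnd (U * V) = toEnd U * toEnd V := by
  show (Mq ((U * V).val)).mulVecLin = _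
  rw [Units.val_mul, Mq_mul, Matrix.mulVecLin_mul]
  rfl

private lemma toEnd_one : toEnd 1 = 1 := by
  show (Mq ((1 : Matrix.GeneralLinearGroup (Fin 3) ℤ).val)).mulVecLin = 1
  rw [Units.val_one, Mq_one, Matrix.mulVecLin_one]
  rfl

private lemma toEnd_cV (U : Matrix.GeneralLinearGroup (Fin 3) ℤ) (x : Fin 3 → ℤ) :
    toEnd U (cV x) = cV (U.val *ᵥ x) := by
  rw [cV_mulVec]; rfl

private lemma toEnd_inj : Function.Injective toEnd := by
  intro U V h
  have hM : Mq U.val = Mq V.val := by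
    ext i j
    have := congrFun (congrArg (fun f : Module.End ℚ V3 => f (Pi.single j 1)) h) i
    simpa [toEnd, Matrix.mulVecLin_apply, Matrix.mulVec_single] using this
  exact Units.ext (Mq_inj hM)

private lemma fin3_cases : ∀ i j k m : Fin 3, i ≠ j → k ≠ i → k ≠ j →
    m = i ∨ m = j ∨ m = k := by decide

private lemma fin3_all : ∀ m : Fin 3, m = 0 ∨ m = 1 ∨ m = 2 := by decide

private lemma fin3_third : ∀ i j : Fin 3, i ≠ j → ∃ k, k ≠ i ∧ k ≠ j := by decide

private lemma fin3_ne_zero : ∀ j : Fin 3, j ≠ 0 → j = 1 ∨ j = 2 := by decide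
private lemma fin3_ne_one : ∀ j : Fin 3, j ≠ 1 → j = 0 ∨ j = 2 := by decide
private lemma fin3_ne_two : ∀ j : Fin 3, j ≠ 2 → j = 0 ∨ j = 1 := by decide

private lemma exists_int_vec (y : V3) :
    ∃ (x : Fin 3 → ℤ) (d : ℚ), d ≠ 0 ∧ cV x = d • y := by
  refine ⟨fun i => (y i).num * ∏ j ∈ Finset.univ.erase i, ((y j).den : ℤ),
    ∏ j, ((y j).den : ℚ), ?_, ?_⟩
  · refine Finset.prod_ne_zero_iff.mpr (fun j _ => ?_)
    exact_mod_cast (y j).den_nz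
  · funext i
    show (((y i).num * ∏ j ∈ Finset.univ.erase i, ((y j).den : ℤ) : ℤ) : ℚ)
      = (∏ j, ((y j).den : ℚ)) * y i
    push_cast
    rw [← Finset.mul_prod_erase Finset.univ (fun j => ((y j).den : ℚ)) (Finset.mem_univ i)]
    have hn : ((y i).num : ℚ) = y i * ((y i).den : ℚ) := (Rat.mul_den_eq_num (y i)).symm
    rw [hn]; ring

private def BqL (G : Matrix (Fin 3) (Fin 3) ℤ) (p : V3) : V3 →ₗ[ℚ] ℚ where
  toFun q := p ⬝ᵥ (Mq G) *ᵥ q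
  map_add' x y := by rw [Matrix.mulVec_add, dotProduct_add]
  map_smul' c x := by
    simp [Matrix.mulVec_smul, dotProduct_smul]

private lemma BqL_cast (G : Matrix (Fin 3) (Fin 3) ℤ) (x y : Fin 3 → ℤ) :
    BqL G (cV x) (cV y) = ((x ⬝ᵥ G *ᵥ y : ℤ) : ℚ) := (cast_dot G x y).symm

private lemma exists_eigbasis (S : Set (Module.End ℚ V3))
    (hsq : ∀ f ∈ S, f * f = 1)
    (hcomm : ∀ f ∈ S, ∀ g ∈ S, f * g = g * f) :
    ∃ b : Basis (Fin 3) ℚ V3, ∀ f ∈ S, ∀ i, f (b i) = b i ∨ f (b i) = -(b i) := by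
  classical
  set P : Set V3 := {x | ∀ f ∈ S, f x = x ∨ f x = -x} with hPdef
  have hP0 : (0 : V3) ∈ P := fun f _ => Or.inl (map_zero f)
  have hff : ∀ f ∈ S, ∀ x, f (f x) = x := by
    intro f hf x
    have : (f * f) x = (1 : Module.End ℚ V3) x := by rw [hsq f hf]
    simpa [Module.End.mul_apply] using this
  have hcomm' : ∀ f ∈ S, ∀ g ∈ S, ∀ x, f (g x) = g (f x) := by
    intro f hf g hg x
    have : (f * g) x = (g * f) x := by rw [hcomm f hf g hg]
    simpa [Module.End.mul_apply] using this
  -- the set of common eigenvectors spans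
  have hspan : ∀ x : V3, x ∈ span ℚ P := by
    intro x
    by_cases hall : ∀ f ∈ S, ∀ y : V3, f y = y ∨ f y = -y
    · exact subset_span (fun f hf => hall f hf x)
    push_neg at hall
    obtain ⟨f₀, hf₀S, y₀, hy₁, hy₂⟩ := hall
    have hwpos : (y₀ + f₀ y₀) ≠ 0 := fun h => hy₂ (eq_neg_of_add_eq_zero_right h)
    have hwneg : (y₀ - f₀ y₀) ≠ 0 := fun h => hy₁ (sub_eq_zero.mp h).symm
    have hwpos_eig : f₀ (y₀ + f₀ y₀) = y₀ + f₀ y₀ := by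
      rw [map_add, hff f₀ hf₀S]; abel
    have hwneg_eig : f₀ (y₀ - f₀ y₀) = -(y₀ - f₀ y₀) := by
      rw [map_sub, hff f₀ hf₀S]; abel
    have key : ∀ ε : ℚ, (ε = 1 ∨ ε = -1) → ∀ z, f₀ z = ε • z → z ∈ span ℚ P := by
      intro ε hε z hz
      have hε2 : ε * ε = 1 := by rcases hε with h | h <;> simp [h]
      have hεne : ε ≠ 0 := by rcases hε with h | h <;> simp [h]
      by_cases hall2 : ∀ g ∈ S, (∀ y : V3, f₀ y = ε • y → g y = y) ∨
          (∀ y : V3, f₀ y = ε • y → g y = -y)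
      · refine subset_span (fun g hg => ?_)
        rcases hall2 g hg with h | h
        · exact Or.inl (h z hz)
        · exact Or.inr (h z hz)
      push_neg at hall2
      obtain ⟨f₁, hf₁S, ⟨y₁, hy₁e, hy₁n⟩, y₂, hy₂e, hy₂n⟩ := hall2
      set A : Submodule ℚ V3 := (Module.End.eigenspace f₀ ε) ⊓ (Module.End.eigenspace f₁ 1) with hA
      set B : Submodule ℚ V3 := (Module.End.eigenspace f₀ ε) ⊓ (Module.End.eigenspace f₁ (-1)) with hB
      set C : Submodule ℚ V3 := Module.End.eigenspace f₀ (-ε) with hC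
      have memA : ∀ y : V3, f₀ y = ε • y → f₁ y = y → y ∈ A := by
        intro y h1 h2
        exact ⟨Module.End.mem_eigenspace_iff.mpr h1,
          Module.End.mem_eigenspace_iff.mpr (by rw [h2, one_smul])⟩
      have memB : ∀ y : V3, f₀ y = ε • y → f₁ y = -y → y ∈ B := by
        intro y h1 h2
        exact ⟨Module.End.mem_eigenspace_iff.mpr h1,
          Module.End.mem_eigenspace_iff.mpr (by rw [h2]; module)⟩
      have haA : (y₂ + f₁ y₂) ≠ 0 := fun h => hy₂n (eq_neg_of_add_eq_zero_right h)
      have haAm : (y₂ + f₁ y₂) ∈ A := by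
        refine memA _ ?_ ?_
        · rw [map_add, hy₂e, hcomm' f₀ hf₀S f₁ hf₁S, hy₂e, _root_.map_smul, smul_add]
        · rw [map_add, hff f₁ hf₁S]; abel
      have haB : (y₁ - f₁ y₁) ≠ 0 := fun h => hy₁n (sub_eq_zero.mp h).symm
      have haBm : (y₁ - f₁ y₁) ∈ B := by
        refine memB _ ?_ ?_
        · rw [map_sub, hy₁e, hcomm' f₀ hf₀S f₁ hf₁S, hy₁e, _root_.map_smul, smul_sub]
        · rw [map_sub, hff f₁ hf₁S]; abel
      have haC : ∃ y ∈ C, y ≠ 0 := by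
        rcases hε with h | h
        · refine ⟨y₀ - f₀ y₀, Module.End.mem_eigenspace_iff.mpr ?_, hwneg⟩
          rw [hwneg_eig, h]; module
        · refine ⟨y₀ + f₀ y₀, Module.End.mem_eigenspace_iff.mpr ?_, hwpos⟩
          rw [hwpos_eig, h]; module
      have hsupAB : A ⊔ B = Module.End.eigenspace f₀ ε := by
        apply le_antisymm (sup_le inf_le_left inf_le_left)
        intro y hy
        have hy' : f₀ y = ε • y := Module.End.mem_eigenspace_iff.mp hy
        have h1 : ((2:ℚ)⁻¹ • (y + f₁ y)) ∈ A := by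
          apply Submodule.smul_mem
          refine memA _ ?_ ?_
          · rw [map_add, hy', hcomm' f₀ hf₀S f₁ hf₁S, hy', _root_.map_smul, smul_add]
          · rw [map_add, hff f₁ hf₁S]; abel
        have h2 : ((2:ℚ)⁻¹ • (y - f₁ y)) ∈ B := by
          apply Submodule.smul_mem
          refine memB _ ?_ ?_
          · rw [map_sub, hy', hcomm' f₀ hf₀S f₁ hf₁S, hy', _root_.map_smul, smul_sub]
          · rw [map_sub, hff f₁ hf₁S]; abel
        have hyy : y = (2:ℚ)⁻¹ • (y + f₁ y) + (2:ℚ)⁻¹ • (y - f₁ y) := by module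
        rw [hyy]
        exact Submodule.add_mem_sup h1 h2
      have hinfAB : A ⊓ B = ⊥ := by
        rw [eq_bot_iff]
        rintro y ⟨⟨-, h1⟩, -, h2⟩
        have h1' : f₁ y = y := by
          have := Module.End.mem_eigenspace_iff.mp h1; rwa [one_smul] at this
        have h2' : f₁ y = -y := by
          have := Module.End.mem_eigenspace_iff.mp h2; rwa [neg_one_smul] at this
        have h3 : (2:ℚ) • y = 0 := by
          rw [two_smul]
          nth_rewrite 1 [← h1']
          rw [h2', neg_add_cancel]
        rcases smul_eq_zero.mp h3 with h' | h'
        · norm_num at h'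
        · simp [h']
      have hsupEC : Module.End.eigenspace f₀ ε ⊔ C = ⊤ := by
        rw [eq_top_iff]
        intro y _hy
        have h1 : ((2:ℚ)⁻¹ • (y + ε • f₀ y)) ∈ Module.End.eigenspace f₀ ε := by
          apply Submodule.smul_mem
          apply Module.End.mem_eigenspace_iff.mpr
          rw [map_add, _root_.map_smul, hff f₀ hf₀S]
          rcases hε with h | h <;> subst h <;> module
        have h2 : ((2:ℚ)⁻¹ • (y - ε • f₀ y)) ∈ C := by
          apply Submodule.smul_mem
          apply Module.End.mem_eigenspace_iff.mpr
          rw [map_sub, _root_.map_smul, hff f₀ hf₀S]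
          rcases hε with h | h <;> subst h <;> module
        have hyy : y = (2:ℚ)⁻¹ • (y + ε • f₀ y) + (2:ℚ)⁻¹ • (y - ε • f₀ y) := by module
        rw [hyy]
        exact Submodule.add_mem_sup h1 h2
      have hinfEC : Module.End.eigenspace f₀ ε ⊓ C = ⊥ := by
        rw [eq_bot_iff]
        rintro y ⟨h1, h2⟩
        have h1' : f₀ y = ε • y := Module.End.mem_eigenspace_iff.mp h1
        have h2' : f₀ y = (-ε) • y := Module.End.mem_eigenspace_iff.mp h2
        have h3 : ((2:ℚ) * ε) • y = 0 := by
          have := h1'.symm.trans h2'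
          rw [neg_smul] at this
          rw [mul_smul, two_smul]
          nth_rewrite 1 [this]
          rw [neg_add_cancel]
        rcases smul_eq_zero.mp h3 with h' | h'
        · exact absurd (by rcases hε with h | h <;> rw [h] at h' <;> norm_num at h') (fun (q : False) => q)
        · simp [h']
      -- finrank bookkeeping
      have eAB := Submodule.finrank_sup_add_finrank_inf_eq A B
      rw [hsupAB, hinfAB, finrank_bot] at eAB
      have eEC := Submodule.finrank_sup_add_finrank_inf_eq (Module.End.eigenspace f₀ ε) C
      rw [hsupEC, hinfEC, finrank_bot, finrank_top, Module.finrank_fin_fun] at eEC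
      have posA : 0 < finrank ℚ A :=
        Module.finrank_pos_iff_exists_ne_zero.mpr
          ⟨⟨_, haAm⟩, by simpa [Submodule.mk_eq_zero] using haA⟩
      have posB : 0 < finrank ℚ B :=
        Module.finrank_pos_iff_exists_ne_zero.mpr
          ⟨⟨_, haBm⟩, by simpa [Submodule.mk_eq_zero] using haB⟩
      have posC : 0 < finrank ℚ C := by
        obtain ⟨y, hyC, hy0⟩ := haC
        exact Module.finrank_pos_iff_exists_ne_zero.mpr
          ⟨⟨y, hyC⟩, by simpa [Submodule.mk_eq_zero] using hy0⟩
      have hrkA : finrank ℚ A = 1 := by omega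
      have hrkB : finrank ℚ B = 1 := by omega
      -- one-dimensional invariant subspaces consist of common eigenvectors
      have stab : ∀ (D : Submodule ℚ V3), finrank ℚ D = 1 →
          (∀ g ∈ S, ∀ y ∈ D, g y ∈ D) → ∀ y ∈ D, y ∈ P := by
        intro D hD hstab y hy
        by_cases hy0 : y = 0
        · rw [hy0]; exact hP0
        intro g hg
        have hsp : span ℚ {y} = D :=
          Submodule.eq_of_le_of_finrank_eq
            ((span_singleton_le_iff_mem y D).mpr hy)
            (by rw [finrank_span_singleton hy0, hD])
        have : g y ∈ span ℚ {y} := by rw [hsp]; exact hstab g hg y hy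
        obtain ⟨c, hc⟩ := mem_span_singleton.mp this
        have hgg : g (g y) = y := hff g hg y
        rw [← hc, _root_.map_smul, ← hc, smul_smul] at hgg
        have hcc : c * c = 1 := smul_cancel_vec hy0 (by rw [hgg, one_smul])
        rcases mul_self_eq_one_iff.mp hcc with h' | h'
        · left; rw [← hc, h', one_smul]
        · right; rw [← hc, h', neg_one_smul]
      have stabA : ∀ g ∈ S, ∀ y ∈ A, g y ∈ A := by
        rintro g hg y ⟨h1, h2⟩
        have h1' : f₀ y = ε • y := Module.End.mem_eigenspace_iff.mp h1
        have h2' : f₁ y = (1:ℚ) • y := Module.End.mem_eigenspace_iff.mp h2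
        rw [one_smul] at h2'
        refine memA _ ?_ ?_
        · rw [hcomm' f₀ hf₀S g hg, h1', _root_.map_smul]
        · rw [hcomm' f₁ hf₁S g hg, h2']
      have stabB : ∀ g ∈ S, ∀ y ∈ B, g y ∈ B := by
        rintro g hg y ⟨h1, h2⟩
        have h1' : f₀ y = ε • y := Module.End.mem_eigenspace_iff.mp h1
        have h2' : f₁ y = -y := by
          have := Module.End.mem_eigenspace_iff.mp h2; rwa [neg_one_smul] at this
        refine memB _ ?_ ?_
        · rw [hcomm' f₀ hf₀S g hg, h1', _root_.map_smul]
        · rw [hcomm' f₁ hf₁S g hg, h2', map_neg]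
      -- decompose z
      have hz1 : ((2:ℚ)⁻¹ • (z + f₁ z)) ∈ A := by
        apply Submodule.smul_mem
        refine memA _ ?_ ?_
        · rw [map_add, hz, hcomm' f₀ hf₀S f₁ hf₁S, hz, _root_.map_smul, smul_add]
        · rw [map_add, hff f₁ hf₁S]; abel
      have hz2 : ((2:ℚ)⁻¹ • (z - f₁ z)) ∈ B := by
        apply Submodule.smul_mem
        refine memB _ ?_ ?_
        · rw [map_sub, hz, hcomm' f₀ hf₀S f₁ hf₁S, hz, _root_.map_smul, smul_sub]
        · rw [map_sub, hff f₁ hf₁S]; abel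
      have hzz : z = (2:ℚ)⁻¹ • (z + f₁ z) + (2:ℚ)⁻¹ • (z - f₁ z) := by module
      rw [hzz]
      exact Submodule.add_mem _
        (subset_span (stab A hrkA stabA _ hz1))
        (subset_span (stab B hrkB stabB _ hz2))
    -- now decompose x along f₀
    have hx1 : f₀ (x + f₀ x) = (1:ℚ) • (x + f₀ x) := by
      rw [map_add, hff f₀ hf₀S, one_smul]; abel
    have hx2 : f₀ (x - f₀ x) = (-1:ℚ) • (x - f₀ x) := by
      rw [map_sub, hff f₀ hf₀S, neg_one_smul]; abel
    have hxx : x = (2:ℚ)⁻¹ • (x + f₀ x) + (2:ℚ)⁻¹ • (x - f₀ x) := by module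
    rw [hxx]
    exact Submodule.add_mem _
      (Submodule.smul_mem _ _ (key 1 (Or.inl rfl) _ hx1))
      (Submodule.smul_mem _ _ (key (-1) (Or.inr rfl) _ hx2))
  -- extract a basis from P
  obtain ⟨s, hsP, hsspan, hsli⟩ := exists_linearIndependent ℚ P
  have hstop : span ℚ s = ⊤ := by
    rw [hsspan]
    exact eq_top_iff.mpr (fun x _ => hspan x)
  have hle : ⊤ ≤ span ℚ (Set.range (Subtype.val : s → V3)) := by
    rw [Subtype.range_coe]; rw [hstop]
  let B0 : Basis s ℚ V3 := Basis.mk hsli hle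
  haveI : Fintype s := FiniteDimensional.fintypeBasisIndex B0
  have hcard : Fintype.card s = 3 := by
    have := Module.finrank_eq_card_basis B0
    rw [Module.finrank_fin_fun] at this
    omega
  let e : s ≃ Fin 3 := Fintype.equivFinOfCardEq hcard
  refine ⟨B0.reindex e, ?_⟩
  intro f hf i
  have hmem : (B0.reindex e) i ∈ P := by
    rw [Module.Basis.reindex_apply, Basis.mk_apply]
    exact hsP (e.symm i).2
  exact hmem f hf

end helpers

/-- The isometry group of the ternary ℤ-lattice with Gram matrix `G`, as a subgroup of
`GL₃(ℤ)`. -/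
def orthGroup (G : Matrix (Fin 3) (Fin 3) ℤ) :
    Subgroup (Matrix.GeneralLinearGroup (Fin 3) ℤ) where
  carrier := {U | (U.val)ᵀ * G * U.val = G}
  mul_mem' := by
    intro a b ha hb
    have ha' : (a.val)ᵀ * G * a.val = G := ha
    have hb' : (b.val)ᵀ * G * b.val = G := hb
    show ((a * b).val)ᵀ * G * (a * b).val = G
    have : ((a * b).val)ᵀ * G * (a * b).val
        = (b.val)ᵀ * ((a.val)ᵀ * G * a.val) * b.val := by
      simp only [Units.val_mul, Matrix.transpose_mul, Matrix.mul_assoc]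
    rw [this, ha', hb']
  one_mem' := by
    show ((1 : Matrix.GeneralLinearGroup (Fin 3) ℤ).val)ᵀ * G * _ = G
    simp
  inv_mem' := by
    intro a ha
    have ha' : (a.val)ᵀ * G * a.val = G := ha
    show ((a⁻¹).val)ᵀ * G * (a⁻¹).val = G
    have h1 : a.val * (a⁻¹).val = 1 := a.mul_inv
    calc ((a⁻¹).val)ᵀ * G * (a⁻¹).val
        = ((a⁻¹).val)ᵀ * ((a.val)ᵀ * G * a.val) * (a⁻¹).val := by rw [ha']
      _ = (a.val * (a⁻¹).val)ᵀ * G * (a.val * (a⁻¹).val) := by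
          simp only [Matrix.transpose_mul, Matrix.mul_assoc]
      _ = G := by rw [h1]; simp

/-- `U` is the symmetry (reflection) of the lattice `(ℤ³, G)` in the vector `w`:
`U w = -w` and `U` fixes every vector orthogonal to `w`. -/
def IsReflVec (G : Matrix (Fin 3) (Fin 3) ℤ) (U : Matrix.GeneralLinearGroup (Fin 3) ℤ)
    (w : Fin 3 → ℤ) : Prop :=
  U.val.mulVec w = -w ∧ ∀ x : Fin 3 → ℤ, w ⬝ᵥ G.mulVec x = 0 → U.val.mulVec x = x

/-- `U` is a symmetry (reflection in some nonzero vector) of the lattice `(ℤ³, G)`. -/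
def IsSymmetryOf (G : Matrix (Fin 3) (Fin 3) ℤ) (U : Matrix.GeneralLinearGroup (Fin 3) ℤ) : Prop :=
  ∃ w : Fin 3 → ℤ, w ≠ 0 ∧ IsReflVec G U w

/-- If every element of the isometry group `O(K)` of a positive definite ternary
ℤ-lattice `K` has order at most 2, then `|O(K)| ≤ 8`; and if `|O(K)| = 8` then
`O(K) ≅ (ℤ/2ℤ)³` and `O(K)` contains exactly three symmetries, in mutually orthogonal
vectors `w`, `u`, `v`. -/
theorem stmt4 (G : Matrix (Fin 3) (Fin 3) ℤ) (hsymm : G.IsSymm)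
    (hpd : ∀ x : Fin 3 → ℤ, x ≠ 0 → 0 < x ⬝ᵥ G.mulVec x)
    (h2 : ∀ U ∈ orthGroup G, U * U = 1) :
    Nat.card (orthGroup G) ≤ 8 ∧
    (Nat.card (orthGroup G) = 8 →
      Nonempty ((orthGroup G) ≃* Multiplicative (ZMod 2 × ZMod 2 × ZMod 2)) ∧
      ∃ w u v : Fin 3 → ℤ, w ≠ 0 ∧ u ≠ 0 ∧ v ≠ 0 ∧
        w ⬝ᵥ G.mulVec u = 0 ∧ w ⬝ᵥ G.mulVec v = 0 ∧ u ⬝ᵥ G.mulVec v = 0 ∧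
        (∃ U ∈ orthGroup G, IsReflVec G U w) ∧
        (∃ U ∈ orthGroup G, IsReflVec G U u) ∧
        (∃ U ∈ orthGroup G, IsReflVec G U v) ∧
        ∀ U ∈ orthGroup G, IsSymmetryOf G U →
          (IsReflVec G U w ∨ IsReflVec G U u ∨ IsReflVec G U v)) := by
    classical
  -- commutativity of the group
  have hinvol : ∀ x : Matrix.GeneralLinearGroup (Fin 3) ℤ, x * x = 1 → x⁻¹ = x := by
    intro x hx
    rw [← mul_one x⁻¹, ← hx, ← mul_assoc, inv_mul_cancel, one_mul]
  have hc : ∀ u ∈ orthGroup G, ∀ v ∈ orthGroup G, u * v = v * u := by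
    intro u hu v hv
    have huv := h2 _ (mul_mem hu hv)
    calc u * v = (u * v)⁻¹ := (hinvol _ huv).symm
      _ = v⁻¹ * u⁻¹ := by rw [_root_.mul_inv_rev]
      _ = v * u := by rw [hinvol _ (h2 v hv), hinvol _ (h2 u hu)]
  -- the set of endomorphisms
  set S : Set (Module.End ℚ V3) := toEnd '' (orthGroup G : Set (Matrix.GeneralLinearGroup (Fin 3) ℤ)) with hSdef
  have hSsq : ∀ f ∈ S, f * f = 1 := by
    rintro f ⟨u, hu, rfl⟩
    rw [← toEnd_mul, h2 u hu, toEnd_one]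
  have hScomm : ∀ f ∈ S, ∀ g ∈ S, f * g = g * f := by
    rintro f ⟨u, hu, rfl⟩ g ⟨v, hv, rfl⟩
    rw [← toEnd_mul, ← toEnd_mul, hc u hu v hv]
  obtain ⟨bb, hbb⟩ := exists_eigbasis S hSsq hScomm
  have hbne : ∀ i, bb i ≠ 0 := fun i => bb.ne_zero i
  have hS : ∀ a : ↥(orthGroup G), toEnd a.val ∈ S := fun a => ⟨a.val, a.2, rfl⟩
  -- sign function
  obtain ⟨sgn, hvals, hF1⟩ :
      ∃ s : ↥(orthGroup G) → Fin 3 → ℚ,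
        (∀ a i, s a i = 1 ∨ s a i = -1) ∧ (∀ a i, toEnd a.val (bb i) = s a i • bb i) := by
    refine ⟨fun a i => if toEnd a.val (bb i) = bb i then 1 else -1, fun a i => ?_, fun a i => ?_⟩
    · by_cases h : toEnd a.val (bb i) = bb i <;> simp [h]
    · by_cases h : toEnd a.val (bb i) = bb i
      · dsimp only
        rw [if_pos h, one_smul]
        exact h
      · rcases hbb _ (hS a) i with h' | h'
        · exact absurd h' h
        · dsimp only
          rw [if_neg h, neg_one_smul]
          exact h'
  have hF2 : ∀ (a b : ↥(orthGroup G)) i, sgn (a * b) i = sgn a i * sgn b i := by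
    intro a b i
    have he : toEnd ((a * b) : ↥(orthGroup G)).val = toEnd a.val * toEnd b.val := by
      rw [show ((a * b) : ↥(orthGroup G)).val = a.val * b.val from rfl, toEnd_mul]
    have h1 := hF1 (a * b) i
    rw [he, Module.End.mul_apply, hF1 b i, _root_.map_smul, hF1 a i, smul_smul, mul_comm (sgn b i)] at h1
    exact (smul_cancel_vec (hbne i) h1).symm
  have hF3 : ∀ a b : ↥(orthGroup G), sgn a = sgn b → a = b := by
    intro a b h
    have he : toEnd a.val = toEnd b.val :=
      bb.ext (fun i => by rw [hF1 a i, hF1 b i, h])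
    exact Subtype.ext (toEnd_inj he)
  have hsgn_one : ∀ i, sgn (1 : ↥(orthGroup G)) i = 1 := by
    intro i
    have h1 := hF1 1 i
    rw [show ((1 : ↥(orthGroup G)).val) = 1 from rfl, toEnd_one, Module.End.one_apply] at h1
    exact (smul_cancel_vec (hbne i) (by rw [← h1, one_smul])).symm
  -- Part 1 : cardinality bound
  have hinj : Function.Injective (fun a : ↥(orthGroup G) => fun i => sgn a i = 1) := by
    intro a b h
    apply hF3
    funext i
    have hd : (sgn a i = 1) = (sgn b i = 1) := congrFun h i
    rcases hvals a i with h1 | h1 <;> rcases hvals b i with h2 | h2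
    · rw [h1, h2]
    · exfalso
      have : sgn b i = 1 := hd ▸ h1
      rw [h2] at this; norm_num at this
    · exfalso
      have : sgn a i = 1 := hd.symm ▸ h2
      rw [h1] at this; norm_num at this
    · rw [h1, h2]
  have hcard8 : Nat.card ↥(orthGroup G) ≤ 8 := by
    have := Nat.card_le_card_of_injective _ hinj
    calc Nat.card ↥(orthGroup G) ≤ Nat.card (Fin 3 → Prop) := this
      _ = 8 := by
        simp [Nat.card_eq_fintype_card, Fintype.card_fun]
  refine ⟨hcard8, ?_⟩
  intro hcard
  haveI hfin : Finite ↥(orthGroup G) := Finite.of_injective _ hinj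
  -- the homomorphism to (ZMod 2)³
  set z : ↥(orthGroup G) → Fin 3 → ZMod 2 := fun a i => if sgn a i = 1 then 0 else 1 with hzdef
  have hz_of_one : ∀ a i, sgn a i = 1 → z a i = 0 := by
    intro a i h; simp only [hzdef]; rw [if_pos h]
  have hz_of_neg : ∀ a i, sgn a i = -1 → z a i = 1 := by
    intro a i h; simp only [hzdef]
    rw [if_neg]; rw [h]; norm_num
  have hsgn_of_z0 : ∀ a i, z a i = 0 → sgn a i = 1 := by
    intro a i h
    rcases hvals a i with h1 | h1
    · exact h1
    · rw [hz_of_neg a i h1] at h; exact absurd h (by decide)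
  have hsgn_of_z1 : ∀ a i, z a i = 1 → sgn a i = -1 := by
    intro a i h
    rcases hvals a i with h1 | h1
    · rw [hz_of_one a i h1] at h; exact absurd h (by decide)
    · exact h1
  have hzmul : ∀ (a b : ↥(orthGroup G)) i, z (a * b) i = z a i + z b i := by
    intro a b i
    have hm := hF2 a b i
    rcases hvals a i with h1 | h1 <;> rcases hvals b i with h2 | h2 <;>
      rw [h1, h2] at hm <;> norm_num at hm
    · rw [hz_of_one _ _ h1, hz_of_one _ _ h2, hz_of_one _ _ hm]; decide
    · rw [hz_of_one _ _ h1, hz_of_neg _ _ h2, hz_of_neg _ _ hm]; decide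
    · rw [hz_of_neg _ _ h1, hz_of_one _ _ h2, hz_of_neg _ _ hm]; decide
    · rw [hz_of_neg _ _ h1, hz_of_neg _ _ h2, hz_of_one _ _ hm]; decide
  set φ : ↥(orthGroup G) →* Multiplicative (ZMod 2 × ZMod 2 × ZMod 2) :=
    MonoidHom.mk' (fun a => Multiplicative.ofAdd (z a 0, z a 1, z a 2)) (by
      intro a b
      show Multiplicative.ofAdd _ = Multiplicative.ofAdd _ * Multiplicative.ofAdd _
      rw [← ofAdd_add]
      apply congrArg
      rw [Prod.mk_add_mk, Prod.mk_add_mk, hzmul, hzmul, hzmul]) with hφdef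
  have hφ_apply : ∀ a, φ a = Multiplicative.ofAdd (z a 0, z a 1, z a 2) := fun a => rfl
  have hφinj : Function.Injective φ := by
    intro a b h
    rw [hφ_apply, hφ_apply] at h
    have h' : (z a 0, z a 1, z a 2) = (z b 0, z b 1, z b 2) := Multiplicative.ofAdd.injective h
    rw [Prod.mk.injEq, Prod.mk.injEq] at h'
    obtain ⟨e0, e1, e2⟩ := h'
    apply hF3
    funext i
    have hz_eq : z a i = z b i := by fin_cases i <;> assumption
    rcases hvals a i with h1 | h1 <;> rcases hvals b i with h2 | h2
    · rw [h1, h2]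
    · exfalso
      rw [hz_of_one _ _ h1, hz_of_neg _ _ h2] at hz_eq
      exact absurd hz_eq (by decide)
    · exfalso
      rw [hz_of_neg _ _ h1, hz_of_one _ _ h2] at hz_eq
      exact absurd hz_eq (by decide)
    · rw [h1, h2]
  have hbij : Function.Bijective φ := by
    rw [Nat.bijective_iff_injective_and_card]
    refine ⟨hφinj, ?_⟩
    rw [hcard]
    rw [Nat.card_eq_fintype_card]
    decide
  refine ⟨⟨MulEquiv.ofBijective φ hbij⟩, ?_⟩
  -- the three reflections
  obtain ⟨t1, ht1⟩ := hbij.2 (Multiplicative.ofAdd ((1 : ZMod 2), (0 : ZMod 2), (0 : ZMod 2)))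
  obtain ⟨t2, ht2⟩ := hbij.2 (Multiplicative.ofAdd ((0 : ZMod 2), (1 : ZMod 2), (0 : ZMod 2)))
  obtain ⟨t3, ht3⟩ := hbij.2 (Multiplicative.ofAdd ((0 : ZMod 2), (0 : ZMod 2), (1 : ZMod 2)))
  have hzext : ∀ (t : ↥(orthGroup G)) (p : ZMod 2 × ZMod 2 × ZMod 2),
      φ t = Multiplicative.ofAdd p → z t 0 = p.1 ∧ z t 1 = p.2.1 ∧ z t 2 = p.2.2 := by
    intro t p hp
    rw [hφ_apply] at hp
    have h' := Multiplicative.ofAdd.injective hp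
    rw [Prod.ext_iff, Prod.ext_iff] at h'
    exact ⟨h'.1, h'.2.1, h'.2.2⟩
  obtain ⟨hz10, hz11, hz12⟩ := hzext t1 _ ht1
  obtain ⟨hz20, hz21, hz22⟩ := hzext t2 _ ht2
  obtain ⟨hz30, hz31, hz32⟩ := hzext t3 _ ht3
  have hs10 : sgn t1 0 = -1 := hsgn_of_z1 _ _ hz10
  have hs11 : sgn t1 1 = 1 := hsgn_of_z0 _ _ hz11
  have hs12 : sgn t1 2 = 1 := hsgn_of_z0 _ _ hz12
  have hs20 : sgn t2 0 = 1 := hsgn_of_z0 _ _ hz20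
  have hs21 : sgn t2 1 = -1 := hsgn_of_z1 _ _ hz21
  have hs22 : sgn t2 2 = 1 := hsgn_of_z0 _ _ hz22
  have hs30 : sgn t3 0 = 1 := hsgn_of_z0 _ _ hz30
  have hs31 : sgn t3 1 = 1 := hsgn_of_z0 _ _ hz31
  have hs32 : sgn t3 2 = -1 := hsgn_of_z1 _ _ hz32
  -- integer eigenvectors
  obtain ⟨w, d0, hd0, hwc⟩ := exists_int_vec (bb 0)
  obtain ⟨u, d1, hd1, huc⟩ := exists_int_vec (bb 1)
  obtain ⟨v, d2, hd2, hvc⟩ := exists_int_vec (bb 2)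
  have hw0 : w ≠ 0 := by
    intro h
    apply smul_ne_zero hd0 (hbne 0)
    rw [← hwc, h, cV_zero]
  have hu0 : u ≠ 0 := by
    intro h
    apply smul_ne_zero hd1 (hbne 1)
    rw [← huc, h, cV_zero]
  have hv0 : v ≠ 0 := by
    intro h
    apply smul_ne_zero hd2 (hbne 2)
    rw [← hvc, h, cV_zero]
  -- action on the integer eigenvectors
  have hact : ∀ (a : ↥(orthGroup G)) (i : Fin 3) (x : Fin 3 → ℤ) (d : ℚ),
      cV x = d • bb i → cV (a.val.val *ᵥ x) = sgn a i • cV x := by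
    intro a i x d hx
    rw [← toEnd_cV, hx, _root_.map_smul, hF1 a i, smul_comm]
  have hact1 : ∀ (a : ↥(orthGroup G)) (i : Fin 3) (x : Fin 3 → ℤ) (d : ℚ),
      cV x = d • bb i → sgn a i = 1 → a.val.val *ᵥ x = x := by
    intro a i x d hx hs
    apply cV_inj
    rw [hact a i x d hx, hs, one_smul]
  have hact_neg : ∀ (a : ↥(orthGroup G)) (i : Fin 3) (x : Fin 3 → ℤ) (d : ℚ),
      cV x = d • bb i → sgn a i = -1 → a.val.val *ᵥ x = -x := by
    intro a i x d hx hs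
    apply cV_inj
    rw [hact a i x d hx, hs, cV_neg, neg_one_smul]
  -- invariance of the form
  have hinvar : ∀ (a : ↥(orthGroup G)) (x y : Fin 3 → ℤ),
      (a.val.val *ᵥ x) ⬝ᵥ G *ᵥ (a.val.val *ᵥ y) = x ⬝ᵥ G *ᵥ y := by
    intro a x y
    have hmem : (a.val.val)ᵀ * G * a.val.val = G := a.2
    have hgen : ∀ (A : Matrix (Fin 3) (Fin 3) ℤ) (x y : Fin 3 → ℤ),
        (A *ᵥ x) ⬝ᵥ G *ᵥ (A *ᵥ y) = x ⬝ᵥ (Aᵀ * G * A) *ᵥ y := by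
      intro A x y
      calc (A *ᵥ x) ⬝ᵥ G *ᵥ (A *ᵥ y)
          = (A *ᵥ x) ⬝ᵥ (G * A) *ᵥ y := by rw [Matrix.mulVec_mulVec]
        _ = ((A *ᵥ x) ᵥ* (G * A)) ⬝ᵥ y := by rw [Matrix.dotProduct_mulVec]
        _ = ((x ᵥ* Aᵀ) ᵥ* (G * A)) ⬝ᵥ y := by rw [Matrix.vecMul_transpose]
        _ = (x ᵥ* (Aᵀ * (G * A))) ⬝ᵥ y := by rw [Matrix.vecMul_vecMul]
        _ = x ⬝ᵥ (Aᵀ * (G * A)) *ᵥ y := by rw [← Matrix.dotProduct_mulVec]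
        _ = x ⬝ᵥ (Aᵀ * G * A) *ᵥ y := by rw [Matrix.mul_assoc]
    rw [hgen, hmem]
  -- orthogonality
  have hwu : w ⬝ᵥ G *ᵥ u = 0 := by
    have h1 := hinvar t1 w u
    rw [hact_neg t1 0 w d0 hwc hs10, hact1 t1 1 u d1 huc hs11, neg_dotProduct] at h1
    omega
  have hwv : w ⬝ᵥ G *ᵥ v = 0 := by
    have h1 := hinvar t1 w v
    rw [hact_neg t1 0 w d0 hwc hs10, hact1 t1 2 v d2 hvc hs12, neg_dotProduct] at h1
    omega
  have huv : u ⬝ᵥ G *ᵥ v = 0 := by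
    have h1 := hinvar t2 u v
    rw [hact_neg t2 1 u d1 huc hs21, hact1 t2 2 v d2 hvc hs22, neg_dotProduct] at h1
    omega
  -- symmetry of the form over ℤ
  have hBsym : ∀ x y : Fin 3 → ℤ, x ⬝ᵥ G *ᵥ y = y ⬝ᵥ G *ᵥ x := by
    intro x y
    conv_lhs => rw [← hsymm.eq]
    rw [Matrix.mulVec_transpose, dotProduct_comm, ← Matrix.dotProduct_mulVec]
  -- B-orthogonality to basis vectors
  have horthB : ∀ (xw yw : Fin 3 → ℤ) (j : Fin 3) (d : ℚ), d ≠ 0 → cV yw = d • bb j →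
      xw ⬝ᵥ G *ᵥ yw = 0 → BqL G (cV xw) (bb j) = 0 := by
    intro xw yw j d hd hyw hxy
    have h1 : BqL G (cV xw) (cV yw) = 0 := by
      rw [BqL_cast, hxy]; norm_num
    rw [hyw, _root_.map_smul, smul_eq_mul] at h1
    rcases mul_eq_zero.mp h1 with h | h
    · exact absurd h hd
    · exact h
  -- the fixing property of a reflection-like element
  have hreflfix : ∀ (a : ↥(orthGroup G)) (i : Fin 3) (xw : Fin 3 → ℤ) (d : ℚ),
      cV xw = d • bb i → xw ≠ 0 →
      (∀ j, j ≠ i → BqL G (cV xw) (bb j) = 0) → (∀ j, j ≠ i → sgn a j = 1) →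
      ∀ x : Fin 3 → ℤ, xw ⬝ᵥ G *ᵥ x = 0 → a.val.val *ᵥ x = x := by
    intro a i xw d hxw hxw0 horth hs x hx
    have hBi : BqL G (cV xw) (bb i) ≠ 0 := by
      intro hB0
      have hall : ∀ j, BqL G (cV xw) (bb j) = 0 := by
        intro j
        by_cases hj : j = i
        · rw [hj]; exact hB0
        · exact horth j hj
      have : BqL G (cV xw) (d • bb i) = 0 := by
        rw [_root_.map_smul, hall i, smul_zero]
      rw [← hxw, BqL_cast] at this
      have := Int.cast_injective (α := ℚ) (this.trans (Int.cast_zero).symm)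
      exact absurd this (ne_of_gt (hpd xw hxw0))
    -- the i-th coefficient of x vanishes
    have hsum := bb.sum_repr (cV x)
    have hBx : BqL G (cV xw) (cV x) = 0 := by
      rw [BqL_cast, hx]; norm_num
    rw [← hsum, map_sum] at hBx
    simp only [_root_.map_smul, smul_eq_mul] at hBx
    have hone : ∑ m : Fin 3, (bb.repr (cV x)) m * (BqL G (cV xw)) (bb m)
        = (bb.repr (cV x)) i * (BqL G (cV xw)) (bb i) :=
      Finset.sum_eq_single_of_mem i (Finset.mem_univ i)
        (fun j _ hj => by rw [horth j hj, mul_zero])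
    rw [hone] at hBx
    have hci : (bb.repr (cV x)) i = 0 := by
      rcases mul_eq_zero.mp hBx with h | h
      · exact h
      · exact absurd h hBi
    -- now a fixes x
    apply cV_inj
    rw [← toEnd_cV]
    conv_lhs => rw [← hsum]
    conv_rhs => rw [← hsum]
    rw [map_sum]
    apply Finset.sum_congr rfl
    intro j _
    rw [_root_.map_smul, hF1 a j]
    by_cases hj : j = i
    · rw [hj, hci, zero_smul, zero_smul]
    · rw [hs j hj, one_smul]
  -- assembled reflections
  have hrefl1 : IsReflVec G t1.val w := by
    refine ⟨hact_neg t1 0 w d0 hwc hs10, ?_⟩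
    refine hreflfix t1 0 w d0 hwc hw0 ?_ ?_
    · intro j hj
      rcases fin3_ne_zero j hj with h | h
      · rw [h]; exact horthB w u 1 d1 hd1 huc hwu
      · rw [h]; exact horthB w v 2 d2 hd2 hvc hwv
    · intro j hj
      rcases fin3_ne_zero j hj with h | h
      · rw [h]; exact hs11
      · rw [h]; exact hs12
  have hrefl2 : IsReflVec G t2.val u := by
    refine ⟨hact_neg t2 1 u d1 huc hs21, ?_⟩
    refine hreflfix t2 1 u d1 huc hu0 ?_ ?_
    · intro j hj
      rcases fin3_ne_one j hj with h | h
      · rw [h]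
        exact horthB u w 0 d0 hd0 hwc (by rw [hBsym]; exact hwu)
      · rw [h]; exact horthB u v 2 d2 hd2 hvc huv
    · intro j hj
      rcases fin3_ne_one j hj with h | h
      · rw [h]; exact hs20
      · rw [h]; exact hs22
  have hrefl3 : IsReflVec G t3.val v := by
    refine ⟨hact_neg t3 2 v d2 hvc hs32, ?_⟩
    refine hreflfix t3 2 v d2 hvc hv0 ?_ ?_
    · intro j hj
      rcases fin3_ne_two j hj with h | h
      · rw [h]
        exact horthB v w 0 d0 hd0 hwc (by rw [hBsym]; exact hwv)
      · rw [h]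
        exact horthB v u 1 d1 hd1 huc (by rw [hBsym]; exact huv)
    · intro j hj
      rcases fin3_ne_two j hj with h | h
      · rw [h]; exact hs30
      · rw [h]; exact hs31
  refine ⟨w, u, v, hw0, hu0, hv0, hwu, hwv, huv,
    ⟨t1.val, t1.2, hrefl1⟩, ⟨t2.val, t2.2, hrefl2⟩, ⟨t3.val, t3.2, hrefl3⟩, ?_⟩
  -- every symmetry is one of the three
  intro U hU hsymU
  set a : ↥(orthGroup G) := ⟨U, hU⟩ with hadef
  obtain ⟨w', hw'ne, hw'1, hw'2⟩ := hsymU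
  -- at least one sign is -1
  have hnot1 : ∃ i, sgn a i = -1 := by
    by_contra h
    push_neg at h
    have hall : ∀ i, sgn a i = 1 := by
      intro i
      rcases hvals a i with h1 | h1
      · exact h1
      · exact absurd h1 (h i)
    have ha1 : a = 1 := hF3 a 1 (funext fun i => (hall i).trans (hsgn_one i).symm)
    have hU1 : U = 1 := by rw [hadef] at ha1; exact Subtype.ext_iff.mp ha1
    rw [hU1] at hw'1
    rw [Units.val_one, Matrix.one_mulVec] at hw'1
    apply hw'ne
    funext i
    have := congrFun hw'1 i
    simp only [Pi.neg_apply] at this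
    simp only [Pi.zero_apply]
    omega
  -- no two signs are -1
  have hnot2 : ∀ i j, i ≠ j → sgn a i = -1 → sgn a j = -1 → False := by
    intro i j hij hi hj
    obtain ⟨k, hki, hkj⟩ := fin3_third i j hij
    set f := BqL G (cV w') with hfdef
    have hfw : f (cV w') ≠ 0 := by
      rw [hfdef, BqL_cast]
      intro h
      have := Int.cast_injective (α := ℚ) (h.trans (Int.cast_zero).symm)
      exact absurd this (ne_of_gt (hpd w' hw'ne))
    have hker : LinearMap.ker f ≤ span ℚ {bb k} := by
      intro y hy
      rw [LinearMap.mem_ker] at hy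
      obtain ⟨x, d, hd, hxy⟩ := exists_int_vec y
      have hx0 : w' ⬝ᵥ G *ᵥ x = 0 := by
        apply Int.cast_injective (α := ℚ)
        rw [Int.cast_zero, ← BqL_cast, ← hfdef, hxy, _root_.map_smul, hy, smul_zero]
      have hfix := hw'2 x hx0
      have hEy : toEnd U y = y := by
        have h1 : toEnd U (cV x) = cV x := by rw [toEnd_cV, hfix]
        rw [hxy, _root_.map_smul] at h1
        exact smul_right_injective V3 hd h1
      have hsum := bb.sum_repr y
      have he : ∑ m, ((bb.repr y) m * sgn a m) • bb m = ∑ m, (bb.repr y) m • bb m := by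
        conv_rhs => rw [hsum, ← hEy]
        conv_rhs => rw [← hsum]
        rw [map_sum]
        apply Finset.sum_congr rfl
        intro m _
        rw [_root_.map_smul]
        rw [show toEnd U (bb m) = toEnd a.val (bb m) from rfl, hF1 a m, smul_smul, mul_comm]
      have hco : (fun m => (bb.repr y) m * sgn a m) = fun m => (bb.repr y) m := by
        have hrepr1 := bb.repr_sum_self (fun m => (bb.repr y) m * sgn a m)
        have hrepr2 := bb.repr_sum_self (fun m => (bb.repr y) m)
        rw [← hrepr1, ← hrepr2, he]
      have hcoeff : ∀ m, sgn a m = -1 → (bb.repr y) m = 0 := by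
        intro m hm
        have := congrFun hco m
        rw [hm] at this
        linarith
      have hy_eq : y = (bb.repr y) k • bb k := by
        conv_lhs => rw [← hsum]
        refine Finset.sum_eq_single_of_mem k (Finset.mem_univ k) (fun m _ hmk => ?_)
        rcases fin3_cases i j k m hij hki hkj with h | h | h
        · rw [h, hcoeff i hi, zero_smul]
        · rw [h, hcoeff j hj, zero_smul]
        · exact absurd h hmk
      rw [hy_eq]
      exact Submodule.smul_mem _ _ (Submodule.mem_span_singleton_self _)
    have hrange : finrank ℚ (LinearMap.range f) = 1 := by
      apply le_antisymm
      · calc finrank ℚ (LinearMap.range f) ≤ finrank ℚ ℚ := Submodule.finrank_le _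
          _ = 1 := Module.finrank_self ℚ
      · have : 0 < finrank ℚ (LinearMap.range f) :=
          Module.finrank_pos_iff_exists_ne_zero.mpr
            ⟨⟨f (cV w'), LinearMap.mem_range_self f _⟩, by simpa [Submodule.mk_eq_zero] using hfw⟩
        omega
    have hkerdim := LinearMap.finrank_range_add_finrank_ker f
    rw [Module.finrank_fin_fun, hrange] at hkerdim
    have hle := Submodule.finrank_mono hker
    rw [finrank_span_singleton (hbne k)] at hle
    omega
  obtain ⟨i, hi⟩ := hnot1
  have huniqs : ∀ j, j ≠ i → sgn a j = 1 := by
    intro j hj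
    rcases hvals a j with h | h
    · exact h
    · exact absurd (hnot2 i j (fun he => hj he.symm) hi h) not_false
  rcases fin3_all i with rfl | rfl | rfl
  · -- a = t1
    have ha : a = t1 := by
      apply hF3
      funext j
      by_cases hj : j = (0 : Fin 3)
      · rw [hj, hi, hs10]
      · rcases fin3_ne_zero j hj with h | h
        · rw [h, huniqs 1 (by rw [← h]; exact hj), hs11]
        · rw [h, huniqs 2 (by rw [← h]; exact hj), hs12]
    have hUeq : U = t1.val := by rw [← ha]
    left
    rw [hUeq]
    exact hrefl1
  · have ha : a = t2 := by
      apply hF3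
      funext j
      by_cases hj : j = (1 : Fin 3)
      · rw [hj, hi, hs21]
      · rcases fin3_ne_one j hj with h | h
        · rw [h, huniqs 0 (by rw [← h]; exact hj), hs20]
        · rw [h, huniqs 2 (by rw [← h]; exact hj), hs22]
    have hUeq : U = t2.val := by rw [← ha]
    right; left
    rw [hUeq]
    exact hrefl2
  · have ha : a = t3 := by
      apply hF3
      funext j
      by_cases hj : j = (2 : Fin 3)
      · rw [hj, hi, hs32]
      · rcases fin3_ne_two j hj with h | h
        · rw [h, huniqs 0 (by rw [← h]; exact hj), hs30]
        · rw [h, huniqs 1 (by rw [← h]; exact hj), hs31]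
    have hUeq : U = t3.val := by rw [← ha]
    right; right
    rw [hUeq]
    exact hrefl3
end

section
/- Let a, b be relatively prime positive integers with b > 2a, and let K₁(a,b) be the positive definite ternary lattice with basis x₁, x₂, x₃ and Gram matrix [[2a,-a,-a],[-a,2a,0],[-a,0,b]]. Then the vectors of minimal nonzero norm 2a in K₁(a,b) are exactly ±x₁, ±x₂, and ±(x₁+x₂). -/
open Matrix

/-- The Gram matrix of the lattice `K₁(a,b)` with respect to the basis `x₁, x₂, x₃`. -/
def K1mat (a b : ℤ) : Matrix (Fin 3) (Fin 3) ℤ := !![2*a,-a,-a;-a,2*a,0;-a,0,b]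

lemma Qform (a b : ℤ) (v : Fin 3 → ℤ) :
    v ⬝ᵥ (K1mat a b).mulVec v =
      a*((v 0 - v 1)^2 + (v 0 - v 2)^2 + (v 1)^2) + (b-a)*(v 2)^2 := by
  simp [K1mat, Matrix.mulVec, dotProduct, Fin.sum_univ_three,
    Matrix.cons_val_zero, Matrix.cons_val_one, Matrix.head_cons,
    Matrix.cons_val_two, Matrix.tail_cons, Matrix.vecHead, Matrix.vecTail]
  ring

lemma one_le_sq_of_ne_zero {z : ℤ} (hz : z ≠ 0) : 1 ≤ z ^ 2 := by
  rcases hz.lt_or_gt with h | h <;> nlinarith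

lemma strictz (a b x y z : ℤ) (ha : 0 < a) (hblt : 2 * a < b) (hz : z ≠ 0) :
    2 * a < a * ((x - y) ^ 2 + (x - z) ^ 2 + y ^ 2) + (b - a) * z ^ 2 := by
  have hz2 : 1 ≤ z ^ 2 := one_le_sq_of_ne_zero hz
  rcases eq_or_ne x z with hxz | hxz
  · subst hxz
    rcases eq_or_ne y 0 with hy | hy
    · subst hy
      nlinarith [sq_nonneg x]
    · have hy2 : 1 ≤ y ^ 2 := one_le_sq_of_ne_zero hy
      nlinarith [sq_nonneg (x - y)]
  · have hxz2 : 1 ≤ (x - z) ^ 2 := one_le_sq_of_ne_zero (sub_ne_zero.mpr hxz)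
    nlinarith [sq_nonneg (x - y), sq_nonneg y]

/-- For coprime positive integers `a, b` with `b > 2a`, the vectors of minimal nonzero
norm `2a` in `K₁(a,b)` are exactly `±x₁`, `±x₂` and `±(x₁+x₂)`. -/
theorem stmt9 (a b : ℤ) (ha : 0 < a) (hb : 0 < b) (hab : IsCoprime a b)
    (hblt : 2 * a < b) :
    (∀ v : Fin 3 → ℤ, v ≠ 0 → 2 * a ≤ v ⬝ᵥ (K1mat a b).mulVec v) ∧
    {v : Fin 3 → ℤ | v ⬝ᵥ (K1mat a b).mulVec v = 2 * a} =
      {![1,0,0], ![-1,0,0], ![0,1,0], ![0,-1,0], ![1,1,0], ![-1,-1,0]} := by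
  constructor
  · intro v hv
    rw [Qform]
    rcases eq_or_ne (v 2) 0 with hz | hz
    · rw [hz]
      have hxy : v 0 ≠ 0 ∨ v 1 ≠ 0 := by
        by_contra h
        push_neg at h
        exact hv (funext fun i => by fin_cases i <;> simp [h.1, h.2, hz])
      rcases hxy with hx | hy
      · have hx2 : 1 ≤ (v 0) ^ 2 := one_le_sq_of_ne_zero hx
        rcases eq_or_ne (v 1) 0 with hy | hy
        · rw [hy]; nlinarith [sq_nonneg (v 0)]
        · have hy2 : 1 ≤ (v 1) ^ 2 := one_le_sq_of_ne_zero hy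
          nlinarith [sq_nonneg (v 0 - v 1)]
      · have hy2 : 1 ≤ (v 1) ^ 2 := one_le_sq_of_ne_zero hy
        rcases eq_or_ne (v 0) 0 with hx | hx
        · rw [hx]; nlinarith [sq_nonneg (v 1)]
        · have hx2 : 1 ≤ (v 0) ^ 2 := one_le_sq_of_ne_zero hx
          nlinarith [sq_nonneg (v 0 - v 1)]
    · exact le_of_lt (strictz a b (v 0) (v 1) (v 2) ha hblt hz)
  · ext v
    simp only [Set.mem_setOf_eq, Set.mem_insert_iff, Set.mem_singleton_iff]
    constructor
    · intro h
      rw [Qform] at h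
      have hz : v 2 = 0 := by
        by_contra hz
        exact absurd h (ne_of_gt (strictz a b (v 0) (v 1) (v 2) ha hblt hz))
      rw [hz] at h
      have hs : (v 0 - v 1) ^ 2 + (v 0) ^ 2 + (v 1) ^ 2 = 2 := by
        have h' : a * ((v 0 - v 1) ^ 2 + (v 0) ^ 2 + (v 1) ^ 2) = a * 2 := by nlinarith
        exact mul_left_cancel₀ ha.ne' h'
      have hv3 : v = ![v 0, v 1, v 2] := funext fun i => by fin_cases i <;> rfl
      rw [hv3, hz]
      have hx2 : (v 0) ^ 2 ≤ 2 := by nlinarith [sq_nonneg (v 0 - v 1), sq_nonneg (v 1)]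
      have hy2 : (v 1) ^ 2 ≤ 2 := by nlinarith [sq_nonneg (v 0 - v 1), sq_nonneg (v 0)]
      have hxl : -1 ≤ v 0 := by nlinarith
      have hxu : v 0 ≤ 1 := by nlinarith
      have hyl : -1 ≤ v 1 := by nlinarith
      have hyu : v 1 ≤ 1 := by nlinarith
      clear hv3 h hz hx2 hy2
      generalize v 0 = x at hs hxl hxu ⊢
      generalize v 1 = y at hs hyl hyu ⊢
      interval_cases x <;> interval_cases y <;> norm_num at hs <;> norm_num <;> tauto
    · intro h
      rcases h with h | h | h | h | h | h <;> subst h <;> rw [Qform] <;>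
        norm_num [Matrix.cons_val_two, Matrix.tail_cons, Matrix.head_cons] <;> ring
end

section
/- Let a, b be relatively prime positive integers with (a,b) ∉ {(1,1),(1,2),(4,3)} such that the ternary lattice K₁(a,b) with Gram matrix [[2a,-a,-a],[-a,2a,0],[-a,0,b]] is positive definite. Then |O(K₁(a,b))| = 12. -/
set_option maxHeartbeats 3000000

open Matrix

/-- The twelve isometries of `K₁(a,b)` in the generic case. -/
def isoK1 : Finset (Matrix (Fin 3) (Fin 3) ℤ) :=
  {!![1,0,0;0,1,0;0,0,1], !![-1,0,0;0,-1,0;0,0,-1],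
   !![-1,0,0;-1,1,0;0,0,-1], !![-1,1,1;-1,0,1;0,0,1],
   !![-1,1,1;0,1,0;0,0,1], !![0,-1,1;-1,0,1;0,0,1],
   !![0,-1,1;1,-1,0;0,0,1], !![0,1,-1;-1,1,0;0,0,-1],
   !![0,1,-1;1,0,-1;0,0,-1], !![1,-1,-1;0,-1,0;0,0,-1],
   !![1,-1,-1;1,0,-1;0,0,-1], !![1,0,0;1,-1,0;0,0,1]}

/-- The full Gram identity for a general matrix, written out entrywise. -/
lemma gram_of (a b p q z0 r s z1 x y e : ℤ) :
    (!![p,r,x;q,s,y;z0,z1,e])ᵀ * K1mat a b * !![p,r,x;q,s,y;z0,z1,e] =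
    !![2*a*p^2 - 2*a*p*q - 2*a*p*z0 + 2*a*q^2 + b*z0^2,
       2*a*p*r - a*p*s - a*p*z1 - a*q*r + 2*a*q*s - a*z0*r + b*z0*z1,
       2*a*p*x - a*p*y - a*p*e - a*q*x + 2*a*q*y - a*z0*x + b*z0*e;
       2*a*p*r - a*p*s - a*p*z1 - a*q*r + 2*a*q*s - a*z0*r + b*z0*z1,
       2*a*r^2 - 2*a*r*s - 2*a*r*z1 + 2*a*s^2 + b*z1^2,
       2*a*r*x - a*r*y - a*r*e - a*s*x + 2*a*s*y - a*z1*x + b*z1*e;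
       2*a*p*x - a*p*y - a*p*e - a*q*x + 2*a*q*y - a*z0*x + b*z0*e,
       2*a*r*x - a*r*y - a*r*e - a*s*x + 2*a*s*y - a*z1*x + b*z1*e,
       2*a*x^2 - 2*a*x*y - 2*a*x*e + 2*a*y^2 + b*e^2] := by
  have ht : (!![p,r,x;q,s,y;z0,z1,e])ᵀ = !![p,q,z0;r,s,z1;x,y,e] := by
    ext i j; fin_cases i <;> fin_cases j <;> rfl
  rw [ht, K1mat, Matrix.mul_fin_three, Matrix.mul_fin_three]
  ext i j; fin_cases i <;> fin_cases j <;> simp <;> ring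

/-- Any vector `(x,y,z)` of norm `2a` in `K₁(a,b)` with `a ∣ z` has `z = 0` and
`(x,y)` one of the six `A₂`-roots. -/
lemma hexlem (a b x y z : ℤ) (ha : 0 < a) (hb : 0 < b) (hab : IsCoprime a b)
    (h1 : ¬(a = 1 ∧ b = 1)) (h2 : ¬(a = 1 ∧ b = 2)) (h3 : ¬(a = 4 ∧ b = 3))
    (hd : 2*a < 3*b) (hz : a ∣ z)
    (hQ : 2*a*x^2 - 2*a*x*y - 2*a*x*z + 2*a*y^2 + b*z^2 = 2*a) :
    z = 0 ∧ ((x = 1 ∧ y = 0) ∨ (x = 0 ∧ y = 1) ∨ (x = 1 ∧ y = 1) ∨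
      (x = -1 ∧ y = 0) ∨ (x = 0 ∧ y = -1) ∨ (x = -1 ∧ y = -1)) := by
  have ha' : a ≠ 0 := by linarith
  have hz0 : z = 0 := by
    by_contra hzne
    obtain ⟨t, rfl⟩ := hz
    have ht : t ≠ 0 := by rintro rfl; simp at hzne
    have ht1 : 1 ≤ t^2 := by rcases ht.lt_or_gt with h|h <;> nlinarith
    have h3S : (a*t)^2 ≤ 3*((x-y)^2 + (x-a*t)^2 + y^2) := by
      nlinarith [sq_nonneg (3*x-2*(a*t)), sq_nonneg (3*y-(a*t)), sq_nonneg (3*x-3*y-(a*t))]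
    have hQ' : a*((x-y)^2 + (x-a*t)^2 + y^2) + (b-a)*(a*t)^2 = 2*a := by linear_combination hQ
    have h6a : (3*b-2*a)*(a*t)^2 ≤ 6*a := by nlinarith [mul_le_mul_of_nonneg_left h3S (le_of_lt ha)]
    have h6 : (3*b-2*a)*a*t^2 ≤ 6 := by
      have := (mul_le_mul_iff_of_pos_right ha).mp (show ((3*b-2*a)*a*t^2) * a ≤ 6 * a by nlinarith)
      linarith
    have hd1 : 1 ≤ 3*b - 2*a := by linarith
    have hda : (3*b-2*a)*a ≤ 6 := by nlinarith
    have ha6 : a ≤ 6 := by nlinarith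
    have hb6 : b ≤ 6 := by nlinarith
    obtain ⟨u, v, huv⟩ := hab
    set k := t^2 with hk
    clear_value k
    clear hQ hQ' h3S h6a ht hzne
    interval_cases a <;> interval_cases b <;> omega
  subst hz0
  have h2' : x^2 - x*y + y^2 = 1 := by
    have : (2*a) * (x^2 - x*y + y^2) = (2*a) * 1 := by linear_combination hQ
    exact mul_left_cancel₀ (by positivity) this
  have hx1 : x ≤ 1 := by nlinarith [sq_nonneg (x-2*y), sq_nonneg (x-1)]
  have hx2 : -1 ≤ x := by nlinarith [sq_nonneg (x-2*y), sq_nonneg (x+1)]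
  have hy1 : y ≤ 1 := by nlinarith [sq_nonneg (y-2*x), sq_nonneg (y-1)]
  have hy2 : -1 ≤ y := by nlinarith [sq_nonneg (y-2*x), sq_nonneg (y+1)]
  refine ⟨rfl, ?_⟩
  interval_cases x <;> interval_cases y <;> omega

/-- Classification of the entries of an isometry of `K₁(a,b)`. -/
lemma corelem (a b p q r s x y z0 z1 e : ℤ) (ha : 0 < a) (hb : 0 < b) (hab : IsCoprime a b)
    (h1 : ¬(a = 1 ∧ b = 1)) (h2 : ¬(a = 1 ∧ b = 2)) (h3 : ¬(a = 4 ∧ b = 3))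
    (hd : 2*a < 3*b) (hz0 : a ∣ z0) (hz1 : a ∣ z1)
    (h00 : 2*a*p^2 - 2*a*p*q - 2*a*p*z0 + 2*a*q^2 + b*z0^2 = 2*a)
    (h11 : 2*a*r^2 - 2*a*r*s - 2*a*r*z1 + 2*a*s^2 + b*z1^2 = 2*a)
    (h01 : 2*a*p*r - a*p*s - a*p*z1 - a*q*r + 2*a*q*s - a*z0*r + b*z0*z1 = -a)
    (h02 : 2*a*p*x - a*p*y - a*p*e - a*q*x + 2*a*q*y - a*z0*x + b*z0*e = -a)
    (h12 : 2*a*r*x - a*r*y - a*r*e - a*s*x + 2*a*s*y - a*z1*x + b*z1*e = 0)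
    (hdet : (p*s - q*r)*e - (p*y - x*q)*z1 + (r*y - x*s)*z0 = 1 ∨
            (p*s - q*r)*e - (p*y - x*q)*z1 + (r*y - x*s)*z0 = -1) :
    z0 = 0 ∧ z1 = 0 ∧
    ((p = -1 ∧ q = -1 ∧ r = 0 ∧ s = 1 ∧ x = 0 ∧ y = 0 ∧ e = -1) ∨
     (p = -1 ∧ q = 0 ∧ r = 0 ∧ s = -1 ∧ x = 0 ∧ y = 0 ∧ e = -1) ∨
     (p = -1 ∧ q = -1 ∧ r = 1 ∧ s = 0 ∧ x = 1 ∧ y = 1 ∧ e = 1) ∨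
     (p = -1 ∧ q = 0 ∧ r = 1 ∧ s = 1 ∧ x = 1 ∧ y = 0 ∧ e = 1) ∨
     (p = 0 ∧ q = -1 ∧ r = -1 ∧ s = 0 ∧ x = 1 ∧ y = 1 ∧ e = 1) ∨
     (p = 0 ∧ q = 1 ∧ r = -1 ∧ s = -1 ∧ x = 1 ∧ y = 0 ∧ e = 1) ∨
     (p = 0 ∧ q = -1 ∧ r = 1 ∧ s = 1 ∧ x = -1 ∧ y = 0 ∧ e = -1) ∨
     (p = 0 ∧ q = 1 ∧ r = 1 ∧ s = 0 ∧ x = -1 ∧ y = -1 ∧ e = -1) ∨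
     (p = 1 ∧ q = 0 ∧ r = -1 ∧ s = -1 ∧ x = -1 ∧ y = 0 ∧ e = -1) ∨
     (p = 1 ∧ q = 1 ∧ r = -1 ∧ s = 0 ∧ x = -1 ∧ y = -1 ∧ e = -1) ∨
     (p = 1 ∧ q = 0 ∧ r = 0 ∧ s = 1 ∧ x = 0 ∧ y = 0 ∧ e = 1) ∨
     (p = 1 ∧ q = 1 ∧ r = 0 ∧ s = -1 ∧ x = 0 ∧ y = 0 ∧ e = 1)) := by
  have ha' : a ≠ 0 := by linarith
  obtain ⟨hz0', hsix0⟩ := hexlem a b p q z0 ha hb hab h1 h2 h3 hd hz0 h00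
  obtain ⟨hz1', hsix1⟩ := hexlem a b r s z1 ha hb hab h1 h2 h3 hd hz1 h11
  subst hz0' hz1'
  refine ⟨rfl, rfl, ?_⟩
  have e01 : 2*p*r - p*s - q*r + 2*q*s = -1 :=
    mul_left_cancel₀ ha' (show a * _ = a * (-1) by linear_combination h01)
  have e02 : 2*p*x - p*y - p*e - q*x + 2*q*y = -1 :=
    mul_left_cancel₀ ha' (show a * _ = a * (-1) by linear_combination h02)
  have e12 : 2*r*x - r*y - r*e - s*x + 2*s*y = 0 :=
    mul_left_cancel₀ ha' (show a * _ = a * (0:ℤ) by linear_combination h12)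
  simp only [mul_zero, zero_mul, sub_zero, add_zero] at hdet
  rcases hsix0 with ⟨hp,hq⟩|⟨hp,hq⟩|⟨hp,hq⟩|⟨hp,hq⟩|⟨hp,hq⟩|⟨hp,hq⟩ <;>
    rcases hsix1 with ⟨hr,hs⟩|⟨hr,hs⟩|⟨hr,hs⟩|⟨hr,hs⟩|⟨hr,hs⟩|⟨hr,hs⟩ <;>
    subst hp hq hr hs <;> revert e01 e02 e12 hdet <;> norm_num <;> intros <;> omega

/-- For coprime positive integers `a, b` with `(a,b) ∉ {(1,1),(1,2),(4,3)}` such that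
`K₁(a,b)` is positive definite, the isometry group `O(K₁(a,b))` has order 12. -/
theorem stmt11 (a b : ℤ) (ha : 0 < a) (hb : 0 < b) (hab : IsCoprime a b)
    (hexc : (a, b) ≠ (1, 1) ∧ (a, b) ≠ (1, 2) ∧ (a, b) ≠ (4, 3))
    (hpd : ∀ x : Fin 3 → ℤ, x ≠ 0 → 0 < x ⬝ᵥ (K1mat a b).mulVec x) :
    Nat.card {U : Matrix (Fin 3) (Fin 3) ℤ //
      IsUnit U.det ∧ Uᵀ * K1mat a b * U = K1mat a b} = 12 := by
  obtain ⟨hx1, hx2, hx3⟩ := hexc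
  have h1 : ¬(a = 1 ∧ b = 1) := by rintro ⟨rfl, rfl⟩; exact hx1 rfl
  have h2 : ¬(a = 1 ∧ b = 2) := by rintro ⟨rfl, rfl⟩; exact hx2 rfl
  have h3 : ¬(a = 4 ∧ b = 3) := by rintro ⟨rfl, rfl⟩; exact hx3 rfl
  have hd : 2*a < 3*b := by
    have h := hpd ![2,1,3] (by intro h; have := congrFun h 2; simp at this)
    simp [K1mat, Matrix.mulVec, dotProduct, Fin.sum_univ_three,
      Matrix.cons_val_zero, Matrix.cons_val_one, Matrix.head_cons,
      Matrix.vecHead, Matrix.vecTail] at h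
    linarith
  have hiff : ∀ U : Matrix (Fin 3) (Fin 3) ℤ,
      (IsUnit U.det ∧ Uᵀ * K1mat a b * U = K1mat a b) ↔ U ∈ isoK1 := by
    intro U
    constructor
    · rintro ⟨hdetU, hGram⟩
      have hdet2 : U.det = 1 ∨ U.det = -1 := Int.isUnit_iff.mp hdetU
      -- the inverse of U
      set V : Matrix (Fin 3) (Fin 3) ℤ := U.det • U.adjugate with hV
      have hUV : U * V = 1 := by
        rw [hV, Matrix.mul_smul, Matrix.mul_adjugate, smul_smul]
        rcases hdet2 with h|h <;> rw [h] <;> norm_num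
      have hGV : Uᵀ * K1mat a b = K1mat a b * V := by
        have h := congrArg (· * V) hGram
        simpa [Matrix.mul_assoc, hUV] using h
      -- rewrite U in eta-expanded literal form
      rw [Matrix.eta_fin_three U] at hGram
      rw [gram_of] at hGram
      have h00 := congrFun (congrFun hGram 0) 0
      have h11 := congrFun (congrFun hGram 1) 1
      have h01 := congrFun (congrFun hGram 0) 1
      have h02 := congrFun (congrFun hGram 0) 2
      have h12 := congrFun (congrFun hGram 1) 2
      simp [K1mat] at h00 h11 h01 h02 h12
      -- divisibility of the bottom-left entries
      have g02 := congrFun (congrFun hGV 0) 2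
      have g12 := congrFun (congrFun hGV 1) 2
      simp [K1mat, Matrix.mul_apply, Fin.sum_univ_three] at g02 g12
      have hz0 : a ∣ U 2 0 := by
        refine hab.dvd_of_dvd_mul_left ⟨U 0 0 + 2*(V 0 2) - V 1 2 - V 2 2, ?_⟩
        linarith [g02]
      have hz1 : a ∣ U 2 1 := by
        refine hab.dvd_of_dvd_mul_left ⟨U 0 1 - V 0 2 + 2*(V 1 2), ?_⟩
        linarith [g12]
      have hdet3 : (U 0 0*U 1 1 - U 1 0*U 0 1)*U 2 2 - (U 0 0*U 1 2 - U 0 2*U 1 0)*U 2 1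
          + (U 0 1*U 1 2 - U 0 2*U 1 1)*U 2 0 = 1 ∨
          (U 0 0*U 1 1 - U 1 0*U 0 1)*U 2 2 - (U 0 0*U 1 2 - U 0 2*U 1 0)*U 2 1
          + (U 0 1*U 1 2 - U 0 2*U 1 1)*U 2 0 = -1 := by
        rw [Matrix.det_fin_three] at hdet2
        rcases hdet2 with h|h
        · left; linear_combination h
        · right; linear_combination h
      obtain ⟨hz0e, hz1e, hD⟩ := corelem a b (U 0 0) (U 1 0) (U 0 1) (U 1 1) (U 0 2) (U 1 2)
        (U 2 0) (U 2 1) (U 2 2) ha hb hab h1 h2 h3 hd hz0 hz1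
        (by linear_combination h00) (by linear_combination h11) (by linear_combination h01)
        (by linear_combination h02) (by linear_combination h12) hdet3
      rcases hD with ⟨hp,hq,hr,hs,hx,hy,he⟩|⟨hp,hq,hr,hs,hx,hy,he⟩|⟨hp,hq,hr,hs,hx,hy,he⟩|
        ⟨hp,hq,hr,hs,hx,hy,he⟩|⟨hp,hq,hr,hs,hx,hy,he⟩|⟨hp,hq,hr,hs,hx,hy,he⟩|
        ⟨hp,hq,hr,hs,hx,hy,he⟩|⟨hp,hq,hr,hs,hx,hy,he⟩|⟨hp,hq,hr,hs,hx,hy,he⟩|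
        ⟨hp,hq,hr,hs,hx,hy,he⟩|⟨hp,hq,hr,hs,hx,hy,he⟩|⟨hp,hq,hr,hs,hx,hy,he⟩ <;>
        rw [Matrix.eta_fin_three U, hp, hq, hr, hs, hx, hy, he, hz0e, hz1e] <;> decide
    · intro hU
      simp only [isoK1, Finset.mem_insert, Finset.mem_singleton] at hU
      rcases hU with hU|hU|hU|hU|hU|hU|hU|hU|hU|hU|hU|hU
      · subst hU
        refine ⟨Int.isUnit_iff.mpr (by decide), ?_⟩
        have ht : (!![(1:ℤ),0,0;0,1,0;0,0,1])ᵀ = !![(1:ℤ),0,0;0,1,0;0,0,1] := by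
          ext i j; fin_cases i <;> fin_cases j <;> rfl
        rw [ht, K1mat, Matrix.mul_fin_three, Matrix.mul_fin_three]
        congr 1 <;> ring
      · subst hU
        refine ⟨Int.isUnit_iff.mpr (by decide), ?_⟩
        have ht : (!![(-1:ℤ),0,0;0,-1,0;0,0,-1])ᵀ = !![(-1:ℤ),0,0;0,-1,0;0,0,-1] := by
          ext i j; fin_cases i <;> fin_cases j <;> rfl
        rw [ht, K1mat, Matrix.mul_fin_three, Matrix.mul_fin_three]
        congr 1 <;> ring
      · subst hU
        refine ⟨Int.isUnit_iff.mpr (by decide), ?_⟩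
        have ht : (!![(-1:ℤ),0,0;-1,1,0;0,0,-1])ᵀ = !![(-1:ℤ),-1,0;0,1,0;0,0,-1] := by
          ext i j; fin_cases i <;> fin_cases j <;> rfl
        rw [ht, K1mat, Matrix.mul_fin_three, Matrix.mul_fin_three]
        congr 1 <;> ring
      · subst hU
        refine ⟨Int.isUnit_iff.mpr (by decide), ?_⟩
        have ht : (!![(-1:ℤ),1,1;-1,0,1;0,0,1])ᵀ = !![(-1:ℤ),-1,0;1,0,0;1,1,1] := by
          ext i j; fin_cases i <;> fin_cases j <;> rfl
        rw [ht, K1mat, Matrix.mul_fin_three, Matrix.mul_fin_three]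
        congr 1 <;> ring
      · subst hU
        refine ⟨Int.isUnit_iff.mpr (by decide), ?_⟩
        have ht : (!![(-1:ℤ),1,1;0,1,0;0,0,1])ᵀ = !![(-1:ℤ),0,0;1,1,0;1,0,1] := by
          ext i j; fin_cases i <;> fin_cases j <;> rfl
        rw [ht, K1mat, Matrix.mul_fin_three, Matrix.mul_fin_three]
        congr 1 <;> ring
      · subst hU
        refine ⟨Int.isUnit_iff.mpr (by decide), ?_⟩
        have ht : (!![(0:ℤ),-1,1;-1,0,1;0,0,1])ᵀ = !![(0:ℤ),-1,0;-1,0,0;1,1,1] := by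
          ext i j; fin_cases i <;> fin_cases j <;> rfl
        rw [ht, K1mat, Matrix.mul_fin_three, Matrix.mul_fin_three]
        congr 1 <;> ring
      · subst hU
        refine ⟨Int.isUnit_iff.mpr (by decide), ?_⟩
        have ht : (!![(0:ℤ),-1,1;1,-1,0;0,0,1])ᵀ = !![(0:ℤ),1,0;-1,-1,0;1,0,1] := by
          ext i j; fin_cases i <;> fin_cases j <;> rfl
        rw [ht, K1mat, Matrix.mul_fin_three, Matrix.mul_fin_three]
        congr 1 <;> ring
      · subst hU
        refine ⟨Int.isUnit_iff.mpr (by decide), ?_⟩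
        have ht : (!![(0:ℤ),1,-1;-1,1,0;0,0,-1])ᵀ = !![(0:ℤ),-1,0;1,1,0;-1,0,-1] := by
          ext i j; fin_cases i <;> fin_cases j <;> rfl
        rw [ht, K1mat, Matrix.mul_fin_three, Matrix.mul_fin_three]
        congr 1 <;> ring
      · subst hU
        refine ⟨Int.isUnit_iff.mpr (by decide), ?_⟩
        have ht : (!![(0:ℤ),1,-1;1,0,-1;0,0,-1])ᵀ = !![(0:ℤ),1,0;1,0,0;-1,-1,-1] := by
          ext i j; fin_cases i <;> fin_cases j <;> rfl
        rw [ht, K1mat, Matrix.mul_fin_three, Matrix.mul_fin_three]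
        congr 1 <;> ring
      · subst hU
        refine ⟨Int.isUnit_iff.mpr (by decide), ?_⟩
        have ht : (!![(1:ℤ),-1,-1;0,-1,0;0,0,-1])ᵀ = !![(1:ℤ),0,0;-1,-1,0;-1,0,-1] := by
          ext i j; fin_cases i <;> fin_cases j <;> rfl
        rw [ht, K1mat, Matrix.mul_fin_three, Matrix.mul_fin_three]
        congr 1 <;> ring
      · subst hU
        refine ⟨Int.isUnit_iff.mpr (by decide), ?_⟩
        have ht : (!![(1:ℤ),-1,-1;1,0,-1;0,0,-1])ᵀ = !![(1:ℤ),1,0;-1,0,0;-1,-1,-1] := by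
          ext i j; fin_cases i <;> fin_cases j <;> rfl
        rw [ht, K1mat, Matrix.mul_fin_three, Matrix.mul_fin_three]
        congr 1 <;> ring
      · subst hU
        refine ⟨Int.isUnit_iff.mpr (by decide), ?_⟩
        have ht : (!![(1:ℤ),0,0;1,-1,0;0,0,1])ᵀ = !![(1:ℤ),1,0;0,-1,0;0,0,1] := by
          ext i j; fin_cases i <;> fin_cases j <;> rfl
        rw [ht, K1mat, Matrix.mul_fin_three, Matrix.mul_fin_three]
        congr 1 <;> ring
  calc Nat.card {U : Matrix (Fin 3) (Fin 3) ℤ //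
        IsUnit U.det ∧ Uᵀ * K1mat a b * U = K1mat a b}
      = Nat.card {U // U ∈ isoK1} := Nat.card_congr (Equiv.subtypeEquivRight hiff)
    _ = isoK1.card := Nat.card_eq_finsetCard isoK1
    _ = 12 := by decide
end

section
/- The symmetric 3×3 integer matrices A = [[a,b,-a-2b],[b,a,b],[-a-2b,b,a]] and B = [[2a+2b,0,-a-b],[0,2a+2b,-a-b],[-a-b,-a-b,a]] are congruent over ℤ: there exists U ∈ GL₃(ℤ) with UᵀAU = B. (That is, the ternary lattice with Gram matrix A is isometric to K₄(a+b, a).) -/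
open Matrix

/-- The symmetric matrices `[[a,b,-a-2b],[b,a,b],[-a-2b,b,a]]` and
`K₄(a+b,a) = [[2a+2b,0,-a-b],[0,2a+2b,-a-b],[-a-b,-a-b,a]]` are congruent over ℤ. -/
theorem stmt14 (a b : ℤ) :
    ∃ U : Matrix (Fin 3) (Fin 3) ℤ, IsUnit U.det ∧
      Uᵀ * !![a, b, -a-2*b; b, a, b; -a-2*b, b, a] * U =
        !![2*a+2*b, 0, -a-b; 0, 2*a+2*b, -a-b; -a-b, -a-b, a] := by
  refine ⟨!![-1,0,0; -1,-1,1; 0,-1,0], ?_, ?_⟩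
  · have h : (!![(-1:ℤ),0,0; -1,-1,1; 0,-1,0]).det = -1 := by decide
    rw [h]; exact isUnit_one.neg
  · ext i j
    fin_cases i <;> fin_cases j <;>
      simp [Matrix.mul_apply, Fin.sum_univ_succ] <;> ring
end

section
/- Let m be an odd squarefree positive integer and L a primitive positive definite ternary ℤ-lattice such that ord_p(dL) ≤ 1 for every prime p dividing m. Then λ_m²(L) ≅ L, i.e., applying the Watson transformation λ_m twice returns a lattice isometric to L. -/
open Matrix

/-- A squarefree integer divides `n` as soon as every prime divisor of it divides `n`. -/
private lemma sf_dvd_aux : ∀ k : ℕ, ∀ m n : ℤ, m.natAbs = k → Squarefree m →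
    (∀ p : ℤ, Prime p → p ∣ m → p ∣ n) → m ∣ n := by
  intro k
  induction k using Nat.strong_induction_on with
  | _ k ih =>
    intro m n hk hsf h
    by_cases hu : IsUnit m
    · exact hu.dvd
    · have hm0 : m ≠ 0 := fun h0 => by subst h0; exact not_squarefree_zero hsf
      obtain ⟨q, hq, hqm⟩ :=
        Int.exists_prime_and_dvd (fun h1 => hu (Int.isUnit_iff_natAbs_eq.mpr h1))
      obtain ⟨t, rfl⟩ := hqm
      have ht0 : t ≠ 0 := fun h0 => hm0 (by simp [h0])
      have hsft : Squarefree t := hsf.squarefree_of_dvd (dvd_mul_left t q)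
      have hlt : t.natAbs < k := by
        subst hk
        rw [Int.natAbs_mul]
        have h2 : 2 ≤ q.natAbs := (Int.prime_iff_natAbs_prime.mp hq).two_le
        have ht1 : 1 ≤ t.natAbs := Nat.one_le_iff_ne_zero.mpr (Int.natAbs_ne_zero.mpr ht0)
        nlinarith
      obtain ⟨n', rfl⟩ := h q hq (dvd_mul_right q t)
      have htn' : t ∣ n' := by
        refine ih t.natAbs hlt t n' rfl hsft ?_
        intro r hr hrt
        have hrn : r ∣ q * n' := h r hr (Dvd.dvd.mul_left hrt q)
        rcases hr.dvd_mul.mp hrn with hrq | hrn'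
        · exfalso
          have hqr : q ∣ r := hr.irreducible.dvd_symm hq.irreducible hrq
          have hqt : q ∣ t := hqr.trans hrt
          exact hq.not_unit (hsf q (mul_dvd_mul_left q hqt))
        · exact hrn'
      exact mul_dvd_mul_left q htn'

private lemma sf_dvd {m n : ℤ} (hsf : Squarefree m)
    (h : ∀ p : ℤ, Prime p → p ∣ m → p ∣ n) : m ∣ n :=
  sf_dvd_aux m.natAbs m n rfl hsf h

/-- Odd numbers divide `a` as soon as they divide `2 * a`. -/
private lemma odd_dvd_of_dvd_two_mul {M a : ℤ} (hM : Odd M) (h : M ∣ 2 * a) : M ∣ a := by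
  obtain ⟨k, hk⟩ := hM
  have hcop : IsCoprime (2 : ℤ) M := ⟨-k, 1, by rw [hk]; ring⟩
  exact hcop.symm.dvd_of_dvd_mul_left h

/-- Local key lemma: if `p² ∤ det G`, `p ∣ Gx`, and `p² ∣ x ⬝ G y` for every `y`
with `p ∣ Gy`, then `p ∣ x`. -/
private lemma loc_lemma (G : Matrix (Fin 3) (Fin 3) ℤ) (p : ℤ) (hp : Prime p)
    (hd : ¬ p ^ 2 ∣ G.det) (x : Fin 3 → ℤ) (ha : ∀ i, p ∣ G.mulVec x i)
    (hb : ∀ y : Fin 3 → ℤ, (∀ i, p ∣ G.mulVec y i) → p ^ 2 ∣ x ⬝ᵥ G.mulVec y) :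
    ∀ i, p ∣ x i := by
  by_cases hpd : p ∣ G.det
  · intro j
    set y : Fin 3 → ℤ := G.adjugate.mulVec (Pi.single j 1) with hy
    have hGy : G.mulVec y = G.det • Pi.single j 1 := by
      rw [hy, mulVec_mulVec, Matrix.mul_adjugate, smul_mulVec, one_mulVec]
    have hyp : ∀ i, p ∣ G.mulVec y i := by
      intro i
      rw [hGy]
      simpa [Pi.smul_apply, smul_eq_mul] using hpd.mul_right ((Pi.single j 1 : Fin 3 → ℤ) i)
    have h2 := hb y hyp
    rw [hGy] at h2
    have hxj : x ⬝ᵥ (G.det • Pi.single j 1) = G.det * x j := by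
      rw [dotProduct_smul]
      simp [dotProduct_single, smul_eq_mul, mul_comm]
    rw [hxj] at h2
    obtain ⟨s, hs⟩ := hpd
    have hps : ¬ p ∣ s := by
      rintro ⟨c, hc⟩
      exact hd ⟨c, by rw [hs, hc]; ring⟩
    rw [hs] at h2
    have h2' : p * p ∣ p * (s * x j) := by
      rw [pow_two] at h2; rwa [mul_assoc] at h2
    have h3 : p ∣ s * x j := (mul_dvd_mul_iff_left hp.ne_zero).mp h2'
    exact (hp.dvd_mul.mp h3).resolve_left hps
  · intro i
    have key : G.adjugate.mulVec (G.mulVec x) = G.det • x := by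
      rw [mulVec_mulVec, Matrix.adjugate_mul, smul_mulVec, one_mulVec]
    have hpi : p ∣ G.det * x i := by
      have h1 : G.det * x i = G.adjugate.mulVec (G.mulVec x) i := by
        rw [key]; simp [Pi.smul_apply, smul_eq_mul]
      rw [h1]
      simp only [Matrix.mulVec, dotProduct]
      exact Finset.dvd_sum fun k _ => Dvd.dvd.mul_left (ha k) _
    exact (hp.dvd_mul.mp hpi).resolve_left hpd

/-- Let `L = (ℤ³, G)` be a primitive positive definite ternary ℤ-lattice, and `m` an
odd squarefree positive integer with `ord_p(dL) ≤ 1` for every prime `p ∣ m`.  Then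
`λ_m²(L) ≅ L`: there is a ℤ-linear isomorphism `f` from `L` onto
`Λ₂ = Λ_m(λ_m(L))` (the underlying lattice of `λ_m²(L)`, computed inside `L` — the
condition `m² ∣ Q(x+y) − Q(y)` expresses that `x ∈ Λ_m` of the form `Q/m`) which
scales the quadratic form by `m²`. -/
theorem stmt18 (m : ℤ) (hm : 0 < m) (hodd : Odd m) (hsf : Squarefree m)
    (G : Matrix (Fin 3) (Fin 3) ℤ) (hsymm : G.IsSymm)
    (hpd : ∀ x : Fin 3 → ℤ, x ≠ 0 → 0 < x ⬝ᵥ G.mulVec x)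
    (hprim : ∀ d : ℤ, (∀ i j, d ∣ G i j) → IsUnit d)
    (hval : ∀ p : ℤ, Prime p → p ∣ m → ¬ p ^ 2 ∣ G.det) :
    ∃ f : (Fin 3 → ℤ) →ₗ[ℤ] (Fin 3 → ℤ),
      Function.Injective f ∧
      Set.range f =
        {x : Fin 3 → ℤ |
          (∀ y : Fin 3 → ℤ, m ∣ ((x + y) ⬝ᵥ G.mulVec (x + y) - y ⬝ᵥ G.mulVec y)) ∧
          ∀ y : Fin 3 → ℤ,
            (∀ z : Fin 3 → ℤ, m ∣ ((y + z) ⬝ᵥ G.mulVec (y + z) - z ⬝ᵥ G.mulVec z)) →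
            m ^ 2 ∣ ((x + y) ⬝ᵥ G.mulVec (x + y) - y ⬝ᵥ G.mulVec y)} ∧
      ∀ x : Fin 3 → ℤ, (f x) ⬝ᵥ G.mulVec (f x) = m ^ 2 * (x ⬝ᵥ G.mulVec x) := by
  have hsym : ∀ x y : Fin 3 → ℤ, y ⬝ᵥ G.mulVec x = x ⬝ᵥ G.mulVec y := by
    intro x y
    calc y ⬝ᵥ G.mulVec x = (y ᵥ* G) ⬝ᵥ x := dotProduct_mulVec _ _ _
      _ = (Gᵀ.mulVec y) ⬝ᵥ x := by rw [mulVec_transpose]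
      _ = (G.mulVec y) ⬝ᵥ x := by rw [hsymm.eq]
      _ = x ⬝ᵥ G.mulVec y := dotProduct_comm _ _
  have hexp : ∀ x y : Fin 3 → ℤ,
      (x + y) ⬝ᵥ G.mulVec (x + y) - y ⬝ᵥ G.mulVec y
        = x ⬝ᵥ G.mulVec x + 2 * (x ⬝ᵥ G.mulVec y) := by
    intro x y
    rw [mulVec_add, dotProduct_add, add_dotProduct, add_dotProduct, hsym y x]
    ring
  have hmsq : Odd (m ^ 2) := hodd.pow
  have hsmul : ∀ (c : ℤ) (x y : Fin 3 → ℤ),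
      (c • x) ⬝ᵥ G.mulVec y = c * (x ⬝ᵥ G.mulVec y) := by
    intro c x y
    rw [smul_dotProduct]; simp [smul_eq_mul]
  have hsmul' : ∀ (c : ℤ) (x y : Fin 3 → ℤ),
      x ⬝ᵥ G.mulVec (c • y) = c * (x ⬝ᵥ G.mulVec y) := by
    intro c x y
    rw [mulVec_smul, dotProduct_smul]; simp [smul_eq_mul]
  refine ⟨m • LinearMap.id, ?_, ?_, ?_⟩
  · intro a b hab
    exact smul_right_injective (Fin 3 → ℤ) hm.ne' hab
  · ext z
    simp only [Set.mem_range, LinearMap.smul_apply, LinearMap.id_coe, id_eq, Set.mem_setOf_eq]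
    constructor
    · rintro ⟨x, rfl⟩
      constructor
      · intro y
        rw [hexp, hsmul, hsmul', hsmul]
        exact ⟨m * (x ⬝ᵥ G.mulVec x) + 2 * (x ⬝ᵥ G.mulVec y), by ring⟩
      · intro y hy
        rw [hexp, hsmul, hsmul', hsmul]
        have hQy : m ∣ y ⬝ᵥ G.mulVec y := by
          have := hy 0
          rwa [add_zero, mulVec_zero, dotProduct_zero, sub_zero] at this
        have hBxy : m ∣ x ⬝ᵥ G.mulVec y := by
          have h3 := hy x
          rw [hexp] at h3
          have h4 : m ∣ 2 * (y ⬝ᵥ G.mulVec x) := (dvd_add_right hQy).mp h3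
          have h5 := odd_dvd_of_dvd_two_mul hodd h4
          rwa [hsym x y] at h5
        obtain ⟨c, hc⟩ := hBxy
        rw [hc]
        exact ⟨x ⬝ᵥ G.mulVec x + 2 * c, by ring⟩
    · rintro ⟨h1, h2⟩
      have hQz : m ∣ z ⬝ᵥ G.mulVec z := by
        have := h1 0
        rwa [add_zero, mulVec_zero, dotProduct_zero, sub_zero] at this
      have hBall : ∀ y, m ∣ z ⬝ᵥ G.mulVec y := by
        intro y
        have h3 := h1 y
        rw [hexp] at h3
        exact odd_dvd_of_dvd_two_mul hodd ((dvd_add_right hQz).mp h3)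
      have hGz : ∀ i, m ∣ G.mulVec z i := by
        intro i
        have h4 := hBall (Pi.single i 1)
        rw [hsym] at h4
        rwa [single_dotProduct, one_mul] at h4
      have hzero : ∀ w : Fin 3 → ℤ,
          m ∣ ((0 + w) ⬝ᵥ G.mulVec (0 + w) - w ⬝ᵥ G.mulVec w) := by
        intro w; rw [zero_add, sub_self]; exact dvd_zero m
      have hQz2 : m ^ 2 ∣ z ⬝ᵥ G.mulVec z := by
        have := h2 0 hzero
        rwa [add_zero, mulVec_zero, dotProduct_zero, sub_zero] at this
      have hB2 : ∀ y, (∀ i, m ∣ G.mulVec y i) → m ^ 2 ∣ z ⬝ᵥ G.mulVec y := by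
        intro y hy
        have hyΛ : ∀ w : Fin 3 → ℤ,
            m ∣ ((y + w) ⬝ᵥ G.mulVec (y + w) - w ⬝ᵥ G.mulVec w) := by
          intro w
          rw [hexp]
          have hq : m ∣ y ⬝ᵥ G.mulVec y := by
            simp only [dotProduct]
            exact Finset.dvd_sum fun k _ => Dvd.dvd.mul_left (hy k) _
          have hb : m ∣ y ⬝ᵥ G.mulVec w := by
            rw [hsym w y]
            simp only [dotProduct]
            exact Finset.dvd_sum fun k _ => Dvd.dvd.mul_left (hy k) _
          obtain ⟨a, ha⟩ := hq; obtain ⟨b, hb'⟩ := hb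
          exact ⟨a + 2 * b, by rw [ha, hb']; ring⟩
        have h5 := h2 y hyΛ
        rw [hexp] at h5
        exact odd_dvd_of_dvd_two_mul hmsq ((dvd_add_right hQz2).mp h5)
      have hpz : ∀ p : ℤ, Prime p → p ∣ m → ∀ i, p ∣ z i := by
        intro p hp hpm
        obtain ⟨t, ht⟩ := hpm
        have ht0 : t ≠ 0 := by rintro rfl; rw [mul_zero] at ht; exact hm.ne' ht
        refine loc_lemma G p hp (hval p hp ⟨t, ht⟩) z
          (fun i => dvd_trans ⟨t, ht⟩ (hGz i)) ?_
        intro y hy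
        have hmy : ∀ i, m ∣ G.mulVec (t • y) i := by
          intro i
          rw [mulVec_smul, Pi.smul_apply, smul_eq_mul]
          obtain ⟨c, hc⟩ := hy i
          exact ⟨c, by rw [hc, ht]; ring⟩
        have h6 := hB2 (t • y) hmy
        rw [hsmul', ht] at h6
        obtain ⟨c, hc⟩ := h6
        refine ⟨c * t, ?_⟩
        have hct : (z ⬝ᵥ G.mulVec y) * t = (p ^ 2 * (c * t)) * t := by
          calc (z ⬝ᵥ G.mulVec y) * t = t * (z ⬝ᵥ G.mulVec y) := mul_comm _ _
            _ = (p * t) ^ 2 * c := hc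
            _ = (p ^ 2 * (c * t)) * t := by ring
        exact mul_right_cancel₀ ht0 hct
      have hmz : ∀ i, m ∣ z i := fun i => sf_dvd hsf (fun p hp hpm => hpz p hp hpm i)
      refine ⟨fun i => z i / m, funext fun i => ?_⟩
      simp only [Pi.smul_apply, smul_eq_mul]
      exact Int.mul_ediv_cancel' (hmz i)
  · intro x
    show (m • x) ⬝ᵥ G.mulVec (m • x) = m ^ 2 * (x ⬝ᵥ G.mulVec x)
    rw [hsmul, hsmul']
    ring
end
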